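/- arXiv:1405.6312 — 7 statements merged into one kernel-verified Lean document; each statement's English description precedes it below -/
import Mathlib

section
/- Let B be a standard one-dimensional Brownian motion started at 0 (on a probability space (Ω, P): B(0)=0 a.s., B has independent increments, for all t ≥ 0 and h > 0 the increment B(t+h) − B(t) is Gaussian with mean 0 and variance h, and t ↦ B(t) is a.s. continuous). Then for every real x and every interval [a,b] ⊆ [0,∞), P(∃ s ∈ [a,b], B(s) = 0) ≥ P(∃ s ∈ [a,b], x + B(s) = 0); that is, the probability that Brownian motion started at 0 has a zero in [a,b] is at least the probability that Brownian motion started at x has a zero in [a,b]. -/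
open MeasureTheory ProbabilityTheory Set

/-- A standard one-dimensional Brownian motion started at 0 on the probability
space `(Ω, P)`: `B 0 = 0` a.s., independent increments, Gaussian increments
`B (t+h) - B t ~ N(0, h)`, and a.s. continuous paths on `[0, ∞)`. -/
structure IsStdBM {Ω : Type} [MeasurableSpace Ω] (P : Measure Ω) (B : ℝ → Ω → ℝ) : Prop where
  isProb : IsProbabilityMeasure P
  meas : ∀ t : ℝ, Measurable (B t)
  start : ∀ᵐ ω ∂P, B 0 ω = 0
  indepIncr : ∀ (n : ℕ) (t : Fin (n + 1) → ℝ), Monotone t → (∀ i, 0 ≤ t i) →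
    iIndepFun
      (fun (i : Fin n) => fun ω => B (t i.succ) ω - B (t i.castSucc) ω) P
  gaussIncr : ∀ t h : ℝ, 0 ≤ t → 0 < h →
    P.map (fun ω => B (t + h) ω - B t ω) = gaussianReal 0 h.toNNReal
  cont : ∀ᵐ ω ∂P, ContinuousOn (fun t => B t ω) (Ici 0)

/-!
For finitely many times `0 ≤ t₁ ≤ ⋯ ≤ tₘ`, independence of the increments turns
`P (∃ i, |x + B tᵢ| < ε)` into the hitting probability of a Gaussian random walk started at `x`,
computed by a first-step recursion in which each step integrates against a Gaussian centred at the
current position. Averaging against Gaussians preserves the class of functions of `x` that are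
even and nonincreasing in `|x|`: for centres `y₁ ≤ y₂` with `y₁ + y₂ ≥ 0`, reflecting about the
midpoint swaps the two densities and pairs each point with one of smaller modulus. Hence the
finite-time probability is largest at `x = 0`. Exhausting a countable dense subset of `[a, b]` by
finite sets and letting `ε ↓ 0`, path continuity and compactness of `[a, b]` recover the events
of the theorem up to null sets.
-/

open scoped NNReal ENNReal

def SymmDecreasing (g : ℝ → ℝ≥0∞) : Prop := ∀ ⦃y z : ℝ⦄, |y| ≤ |z| → g z ≤ g y

lemma SymmDecreasing.apply_neg {g : ℝ → ℝ≥0∞} (hg : SymmDecreasing g) (y : ℝ) : g (-y) = g y :=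
  le_antisymm (hg (abs_neg y).ge) (hg (abs_neg y).le)

-- The general `mul_add_mul_le_mul_add_mul` needs cancellative addition, which `ℝ≥0∞` lacks.
lemma ENNReal.mul_add_mul_le_mul_add_mul {a b c d : ℝ≥0∞} (hab : a ≤ b) (hcd : c ≤ d) :
    a * d + b * c ≤ a * c + b * d := by
  obtain ⟨b, rfl⟩ := exists_add_of_le hab
  obtain ⟨d, rfl⟩ := exists_add_of_le hcd
  calc a * (c + d) + (a + b) * c = a * c + a * (c + d) + b * c := by ring
    _ ≤ a * c + a * (c + d) + b * c + b * d := le_self_add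
    _ = a * c + (a + b) * (c + d) := by ring

lemma Monotone.fin_cons {α : Type*} [Preorder α] {m : ℕ} {t : Fin m → α} (ht : Monotone t)
    {a : α} (ha : ∀ i, a ≤ t i) : Monotone (Fin.cons a t : Fin (m + 1) → α) := by
  intro i j hij
  cases i using Fin.cases with
  | zero => cases j using Fin.cases with
    | zero => exact le_rfl
    | succ j => exact ha j
  | succ i => cases j using Fin.cases with
    | zero => exact absurd hij (Fin.succ_pos i).not_ge
    | succ j => exact ht (Fin.succ_le_succ_iff.1 hij)

lemma Fin.partialSum_sub {G : Type*} [AddCommGroup G] {n : ℕ} (f : Fin (n + 1) → G)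
    (i : Fin (n + 1)) :
    Fin.partialSum (fun j : Fin n => f j.succ - f j.castSucc) i = f i - f 0 := by
  induction i using Fin.induction with
  | zero => simp
  | succ i ih => rw [Fin.partialSum_succ, ih]; abel

lemma measurable_partialSum {n : ℕ} (i : Fin (n + 1)) :
    Measurable fun r : Fin n → ℝ => Fin.partialSum r i := by
  induction i using Fin.induction with
  | zero => simp only [Fin.partialSum_zero]; exact measurable_const
  | succ i ih => simp only [Fin.partialSum_succ]; exact ih.add (measurable_pi_apply i)

lemma exists_eq_zero_iff_forall_exists_abs_lt {X : Type*} [TopologicalSpace X] {K T : Set X}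
    (hK : IsCompact K) (hTK : T ⊆ K) (hKT : K ⊆ closure T) {f : X → ℝ} (hf : ContinuousOn f K) :
    (∃ s ∈ K, f s = 0) ↔ ∀ ε > 0, ∃ t ∈ T, |f t| < ε := by
  constructor
  · rintro ⟨s, hsK, hs⟩ ε hε
    have hcl : f s ∈ closure (f '' T) := ((hf s hsK).mono hTK).mem_closure_image (hKT hsK)
    obtain ⟨_, ⟨t, ht, rfl⟩, hdist⟩ := Metric.mem_closure_iff.1 hcl ε hε
    exact ⟨t, ht, by simpa [hs, Real.dist_eq] using hdist⟩
  · intro h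
    obtain ⟨t₀, ht₀, -⟩ := h 1 one_pos
    obtain ⟨s, hsK, hmin⟩ := hK.exists_isMinOn ⟨t₀, hTK ht₀⟩ hf.abs
    refine ⟨s, hsK, abs_eq_zero.1 <| le_antisymm ?_ (abs_nonneg _)⟩
    refine le_of_forall_pos_lt_add fun ε hε => ?_
    obtain ⟨t, ht, hlt⟩ := h ε hε
    exact (hmin (hTK ht)).trans_lt (by simpa using hlt)

section Independence

variable {Ω : Type*} [MeasurableSpace Ω] {P : Measure Ω}

lemma ProbabilityTheory.iIndepFun.indepFun_head_tail {β : Type*} [MeasurableSpace β]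
    {n : ℕ} {W : Fin (n + 1) → Ω → β} (h : iIndepFun W P) (hW : ∀ i, Measurable (W i)) :
    IndepFun (W 0) (fun ω (j : Fin n) => W j.succ ω) P := by
  classical
  exact (h.indepFun_finset {0} {0}ᶜ disjoint_compl_right hW).comp
    (measurable_pi_apply ⟨0, Finset.mem_singleton_self 0⟩)
    (measurable_pi_lambda _ fun j : Fin n => measurable_pi_apply ⟨j.succ, by simp⟩)

lemma ProbabilityTheory.IndepFun.measure_preimage_prodMk [IsFiniteMeasure P] {α β : Type*}
    [MeasurableSpace α] [MeasurableSpace β] {Y : Ω → α} {R : Ω → β} (hYR : IndepFun Y R P)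
    (hY : Measurable Y) (hR : Measurable R) {M : Set (α × β)} (hM : MeasurableSet M) :
    P ((fun ω => (Y ω, R ω)) ⁻¹' M) = ∫⁻ y, P (R ⁻¹' (Prod.mk y ⁻¹' M)) ∂P.map Y := by
  rw [← Measure.map_apply (hY.prodMk hR) hM,
    (indepFun_iff_map_prod_eq_prod_map_map hY.aemeasurable hR.aemeasurable).1 hYR,
    Measure.prod_apply hM]
  exact lintegral_congr fun y => Measure.map_apply hR (hM.preimage measurable_prodMk_left)

end Independence

section GaussianReflection

lemma lintegral_eq_setLIntegral_Ioi_add_reflect {f : ℝ → ℝ≥0∞} (hf : Measurable f) (c : ℝ) :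
    ∫⁻ w, f w = ∫⁻ w in Ioi (c / 2), (f w + f (c - w)) := by
  have hpre : (fun w => c - w) ⁻¹' (Ioi (c / 2))ᶜ = Ici (c / 2) := by
    ext w
    simp only [mem_preimage, mem_compl_iff, mem_Ioi, not_lt, mem_Ici]
    constructor <;> intro h <;> linarith
  have hreflect : ∫⁻ w in (Ioi (c / 2))ᶜ, f w = ∫⁻ w in Ioi (c / 2), f (c - w) := by
    rw [← (Measure.measurePreserving_sub_left volume c).setLIntegral_comp_preimage_emb
      (measurableEmbedding_subLeft c), hpre, setLIntegral_congr Ioi_ae_eq_Ici.symm]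
  rw [← lintegral_add_compl f measurableSet_Ioi, hreflect, lintegral_add_left' hf.aemeasurable]

lemma gaussianPDF_reflect (y₁ y₂ : ℝ) (v : ℝ≥0) (w : ℝ) :
    gaussianPDF y₁ v (y₁ + y₂ - w) = gaussianPDF y₂ v w := by
  simp only [gaussianPDF, gaussianPDFReal]
  ring_nf

lemma gaussianPDF_le_gaussianPDF {y₁ y₂ w : ℝ} (v : ℝ≥0) (hy : y₁ ≤ y₂)
    (hw : y₁ + y₂ ≤ 2 * w) : gaussianPDF y₁ v w ≤ gaussianPDF y₂ v w := by
  have hsq : (w - y₂) ^ 2 ≤ (w - y₁) ^ 2 := by nlinarith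
  simp only [gaussianPDF, gaussianPDFReal]
  gcongr ENNReal.ofReal (_ * Real.exp (-?_ / _))

/-- Pair each `w` beyond the midpoint of the centres with its mirror image `y₁ + y₂ - w`: the
mirror swaps the two densities, the density centred at `y₂` is the larger one at `w`, and `g` is
larger at the mirror image, so the rearrangement inequality applies pointwise. -/
lemma lintegral_gaussianReal_le_of_reflect {g : ℝ → ℝ≥0∞} (hg : Measurable g) (v : ℝ≥0)
    {y₁ y₂ : ℝ} (hy : y₁ ≤ y₂) (hreflect : ∀ w, (y₁ + y₂) / 2 < w → g w ≤ g (y₁ + y₂ - w)) :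
    ∫⁻ w, g w ∂gaussianReal y₂ v ≤ ∫⁻ w, g w ∂gaussianReal y₁ v := by
  rcases eq_or_ne v 0 with rfl | hv
  · simp only [gaussianReal_zero_var, lintegral_dirac]
    rcases hy.eq_or_lt with rfl | hlt
    · exact le_rfl
    · simpa using hreflect y₂ (by linarith)
  simp only [gaussianReal_of_var_ne_zero _ hv,
    lintegral_withDensity_eq_lintegral_mul _ (measurable_gaussianPDF _ _) hg, Pi.mul_apply]
  rw [lintegral_eq_setLIntegral_Ioi_add_reflect (f := fun w => gaussianPDF y₂ v w * g w)
      ((measurable_gaussianPDF _ _).mul hg) (y₁ + y₂),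
    lintegral_eq_setLIntegral_Ioi_add_reflect (f := fun w => gaussianPDF y₁ v w * g w)
      ((measurable_gaussianPDF _ _).mul hg) (y₁ + y₂)]
  refine setLIntegral_mono (by fun_prop) fun w hw => ?_
  have hpdf : gaussianPDF y₁ v w ≤ gaussianPDF y₂ v w :=
    gaussianPDF_le_gaussianPDF v hy (by linarith [mem_Ioi.1 hw])
  rw [gaussianPDF_reflect, add_comm y₁ y₂, gaussianPDF_reflect, add_comm y₂ y₁]
  calc gaussianPDF y₂ v w * g w + gaussianPDF y₁ v w * g (y₁ + y₂ - w)
      = g w * gaussianPDF y₂ v w + g (y₁ + y₂ - w) * gaussianPDF y₁ v w := by ring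
    _ ≤ g w * gaussianPDF y₁ v w + g (y₁ + y₂ - w) * gaussianPDF y₂ v w :=
      ENNReal.mul_add_mul_le_mul_add_mul (hreflect w hw) hpdf
    _ = _ := by ring

lemma lintegral_gaussianReal_neg {g : ℝ → ℝ≥0∞} (hg : Measurable g) (y : ℝ) (v : ℝ≥0) :
    ∫⁻ w, g w ∂gaussianReal (-y) v = ∫⁻ w, g (-w) ∂gaussianReal y v := by
  rw [← gaussianReal_map_neg, lintegral_map hg measurable_neg]

lemma SymmDecreasing.lintegral_gaussianReal {g : ℝ → ℝ≥0∞} (hg : SymmDecreasing g)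
    (hgm : Measurable g) (v : ℝ≥0) :
    SymmDecreasing fun y => ∫⁻ w, g w ∂gaussianReal y v := by
  have hcentre_nonneg : ∀ ⦃y z : ℝ⦄, |y| ≤ z →
      ∫⁻ w, g w ∂gaussianReal z v ≤ ∫⁻ w, g w ∂gaussianReal y v := by
    intro y z hyz
    obtain ⟨hzy, hyz'⟩ := abs_le.1 hyz
    refine lintegral_gaussianReal_le_of_reflect hgm v hyz' fun w hw => hg ?_
    rw [abs_of_pos (show 0 < w by linarith)]
    exact abs_le.2 ⟨by linarith, by linarith⟩
  intro y z hyz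
  rcases le_total 0 z with hz | hz
  · exact hcentre_nonneg (hyz.trans_eq (abs_of_nonneg hz))
  · dsimp only
    rw [← neg_neg z, lintegral_gaussianReal_neg hgm]
    simp only [hg.apply_neg]
    exact hcentre_nonneg (hyz.trans_eq (abs_of_nonpos hz))

end GaussianReflection

section GaussianWalk

/-- The probability that the Gaussian random walk started at `x`, whose `i`-th step has variance
`v i`, is at distance `< ε` from `0` after one of its steps. -/
noncomputable def gaussianWalkHitProb (ε : ℝ) : {n : ℕ} → (Fin n → ℝ≥0) → ℝ → ℝ≥0∞
  | 0, _, _ => 0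
  | _ + 1, v, x =>
    ∫⁻ y, (if |y| < ε then 1 else gaussianWalkHitProb ε (Fin.tail v) y) ∂gaussianReal x (v 0)

lemma gaussianWalkHitProb_le_one (ε : ℝ) {n : ℕ} (v : Fin n → ℝ≥0) (x : ℝ) :
    gaussianWalkHitProb ε v x ≤ 1 := by
  induction n generalizing x with
  | zero => simp [gaussianWalkHitProb]
  | succ n ih =>
    calc gaussianWalkHitProb ε v x ≤ ∫⁻ _, 1 ∂gaussianReal x (v 0) :=
          lintegral_mono fun y => by split_ifs; exacts [le_rfl, ih _ y]
      _ = 1 := by simp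

lemma measurable_gaussianWalkHitProb (ε : ℝ) {n : ℕ} (v : Fin n → ℝ≥0) :
    Measurable (gaussianWalkHitProb ε v) := by
  induction n with
  | zero => exact measurable_const
  | succ n ih =>
    have hg : Measurable fun y =>
        if |y| < ε then (1 : ℝ≥0∞) else gaussianWalkHitProb ε (Fin.tail v) y :=
      Measurable.ite (measurableSet_lt measurable_abs measurable_const) measurable_const (ih _)
    exact (Measure.measurable_lintegral hg).comp
      (measurable_gaussianReal.comp (measurable_id.prodMk measurable_const))

lemma symmDecreasing_gaussianWalkHitProb (ε : ℝ) {n : ℕ} (v : Fin n → ℝ≥0) :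
    SymmDecreasing (gaussianWalkHitProb ε v) := by
  induction n with
  | zero => intro y z _; simp [gaussianWalkHitProb]
  | succ n ih =>
    have hg : SymmDecreasing fun y =>
        if |y| < ε then 1 else gaussianWalkHitProb ε (Fin.tail v) y := by
      intro y z hyz
      by_cases hy : |y| < ε
      · simp only [if_pos hy]
        split_ifs
        exacts [le_rfl, gaussianWalkHitProb_le_one ε _ z]
      · simp only [if_neg hy, if_neg fun hz : |z| < ε => hy (hyz.trans_lt hz)]
        exact ih _ hyz
    exact hg.lintegral_gaussianReal (Measurable.ite (measurableSet_lt measurable_abs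
      measurable_const) measurable_const (measurable_gaussianWalkHitProb ε _)) (v 0)

variable {Ω : Type*} [MeasurableSpace Ω] {P : Measure Ω}

theorem measure_exists_abs_add_partialSum_lt_eq [IsProbabilityMeasure P] {n : ℕ}
    {W : Fin n → Ω → ℝ} (hind : iIndepFun W P) (hW : ∀ i, Measurable (W i)) {v : Fin n → ℝ≥0}
    (hlaw : ∀ i, P.map (W i) = gaussianReal 0 (v i)) (ε x : ℝ) :
    P {ω | ∃ i : Fin n, |x + Fin.partialSum (fun j => W j ω) i.succ| < ε}
      = gaussianWalkHitProb ε v x := by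
  induction n generalizing x with
  | zero => simp [gaussianWalkHitProb]
  | succ n ih =>
    set Y : Ω → ℝ := fun ω => x + W 0 ω
    set R : Ω → Fin n → ℝ := fun ω j => W j.succ ω
    have hY : Measurable Y := measurable_const.add (hW 0)
    have hR : Measurable R := measurable_pi_lambda _ fun j : Fin n => hW j.succ
    have hlawY : P.map Y = gaussianReal x (v 0) := by
      rw [show Y = (x + ·) ∘ W 0 from rfl, ← Measure.map_map (measurable_const_add x) (hW 0),
        hlaw, gaussianReal_map_const_add, zero_add]
    set M : Set (ℝ × (Fin n → ℝ)) :=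
      {p | |p.1| < ε ∨ ∃ j : Fin n, |p.1 + Fin.partialSum p.2 j.succ| < ε}
    have hM : MeasurableSet M := by
      simp only [M, ofPred_or, ofPred_exists]
      exact (measurableSet_lt measurable_fst.abs measurable_const).union
        (MeasurableSet.iUnion fun j => measurableSet_lt
          (measurable_fst.add ((measurable_partialSum j.succ).comp measurable_snd)).abs
          measurable_const)
    have hevent : {ω | ∃ i : Fin (n + 1), |x + Fin.partialSum (fun j => W j ω) i.succ| < ε}
        = (fun ω => (Y ω, R ω)) ⁻¹' M := by
      ext ω
      simp [M, Y, R, Fin.exists_fin_succ, Fin.partialSum_succ', add_assoc, Fin.tail_def]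
    have hYR : IndepFun Y R P :=
      (hind.indepFun_head_tail hW).comp (measurable_const_add x) measurable_id
    rw [hevent, hYR.measure_preimage_prodMk hY hR hM, hlawY]
    refine lintegral_congr fun y => ?_
    split_ifs with hy
    · have hslice : Prod.mk y ⁻¹' M = univ := by ext r; simp [M, hy]
      rw [hslice, preimage_univ, measure_univ]
    · have hslice : Prod.mk y ⁻¹' M = {r | ∃ j : Fin n, |y + Fin.partialSum r j.succ| < ε} := by
        ext r; simp [M, hy]
      rw [hslice]
      exact ih (hind.precomp (Fin.succ_injective _)) (fun j => hW _) (fun j => hlaw _) y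

end GaussianWalk

section Brownian

variable {Ω : Type} [MeasurableSpace Ω] {P : Measure Ω} {B : ℝ → Ω → ℝ}

lemma IsStdBM.map_sub_eq_gaussianReal (hB : IsStdBM P B) {s t : ℝ} (hs : 0 ≤ s) (hst : s ≤ t) :
    P.map (fun ω => B t ω - B s ω) = gaussianReal 0 (t - s).toNNReal := by
  rcases hst.eq_or_lt with rfl | hlt
  · have := hB.isProb
    simp [Measure.map_const]
  · simpa using hB.gaussIncr s (t - s) hs (sub_pos.2 hlt)

lemma IsStdBM.exists_gaussianWalkHitProb_eq (hB : IsStdBM P B) {m : ℕ} {t : Fin m → ℝ}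
    (ht : Monotone t) (ht0 : ∀ i, 0 ≤ t i) (ε : ℝ) :
    ∃ v : Fin m → ℝ≥0, ∀ x, P {ω | ∃ i, |x + B (t i) ω| < ε} = gaussianWalkHitProb ε v x := by
  have := hB.isProb
  set s : Fin (m + 1) → ℝ := Fin.cons 0 t
  have hs0 : ∀ i, 0 ≤ s i := fun i => by cases i using Fin.cases <;> simp [s, ht0]
  have hs : Monotone s := ht.fin_cons ht0
  refine ⟨fun j => (s j.succ - s j.castSucc).toNNReal, fun x => ?_⟩
  rw [← measure_exists_abs_add_partialSum_lt_eq (hB.indepIncr m s hs hs0)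
    (fun j => (hB.meas _).sub (hB.meas _))
    (fun j => hB.map_sub_eq_gaussianReal (hs0 _) (hs (Fin.castSucc_le_succ j))) ε x]
  refine measure_congr ?_
  filter_upwards [hB.start] with ω h0
  have htel : ∀ i : Fin m,
      Fin.partialSum (fun j : Fin m => B (s j.succ) ω - B (s j.castSucc) ω) i.succ = B (t i) ω :=
    fun i => (Fin.partialSum_sub (fun j => B (s j) ω) i.succ).trans (by simp [s, h0])
  show (∃ i, _) = ∃ i, _
  simp only [htel]

lemma IsStdBM.symmDecreasing_measure_exists_mem_finset (hB : IsStdBM P B) (F : Finset ℝ)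
    (hF : ∀ t ∈ F, 0 ≤ t) (ε : ℝ) :
    SymmDecreasing fun x => P {ω | ∃ t ∈ F, |x + B t ω| < ε} := by
  have hevent : ∀ x, {ω | ∃ s ∈ F, |x + B s ω| < ε}
      = {ω | ∃ i, |x + B (F.orderEmbOfFin rfl i) ω| < ε} := by
    intro x
    ext ω
    simp only [mem_ofPred_eq, ← Finset.mem_coe, ← F.range_orderEmbOfFin rfl, exists_range_iff]
  obtain ⟨v, hv⟩ := hB.exists_gaussianWalkHitProb_eq (F.orderEmbOfFin rfl).monotone
    (fun i => hF _ (F.orderEmbOfFin_mem rfl i)) ε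
  intro y z hyz
  simp only [hevent, hv]
  exact symmDecreasing_gaussianWalkHitProb ε v hyz

lemma IsStdBM.symmDecreasing_measure_exists_mem (hB : IsStdBM P B) {T : Set ℝ}
    (hT : T.Countable) (hT0 : T ⊆ Ici 0) (ε : ℝ) :
    SymmDecreasing fun x => P {ω | ∃ t ∈ T, |x + B t ω| < ε} := by
  have := hT.to_subtype
  set E : ℝ → Finset T → Set Ω :=
    fun x F => {ω | ∃ t ∈ F.map (Function.Embedding.subtype _), |x + B t ω| < ε}
  have hunion : ∀ x, {ω | ∃ t ∈ T, |x + B t ω| < ε} = ⋃ F, E x F := by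
    intro x
    ext ω
    simp only [E, mem_ofPred_eq, mem_iUnion, Finset.mem_map, Function.Embedding.coe_subtype]
    constructor
    · rintro ⟨t, ht, h⟩
      exact ⟨{⟨t, ht⟩}, t, ⟨⟨t, ht⟩, Finset.mem_singleton_self _, rfl⟩, h⟩
    · rintro ⟨F, _, ⟨t, -, rfl⟩, h⟩
      exact ⟨t, t.2, h⟩
  have hdir : ∀ x, Directed (· ⊆ ·) (E x) := fun x =>
    Monotone.directed_le fun F G hFG ω ⟨t, ht, h⟩ => ⟨t, Finset.map_subset_map.2 hFG ht, h⟩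
  intro y z hyz
  simp only [hunion, (hdir _).measure_iUnion]
  exact iSup_mono fun F => hB.symmDecreasing_measure_exists_mem_finset _
    (fun t ht => by obtain ⟨t, -, rfl⟩ := Finset.mem_map.1 ht; exact hT0 t.2) ε hyz

lemma IsStdBM.measurableSet_exists_mem_abs_add_lt (hB : IsStdBM P B) {T : Set ℝ}
    (hT : T.Countable) (y ε : ℝ) : MeasurableSet {ω | ∃ t ∈ T, |y + B t ω| < ε} := by
  have hunion : {ω | ∃ t ∈ T, |y + B t ω| < ε} = ⋃ t ∈ T, {ω | |y + B t ω| < ε} := by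
    ext; simp
  rw [hunion]
  exact .biUnion hT fun t _ => measurableSet_lt ((hB.meas t).const_add y).abs measurable_const

lemma IsStdBM.ae_exists_eq_zero_iff (hB : IsStdBM P B) {a b : ℝ} (ha : 0 ≤ a) {T : Set ℝ}
    (hTK : T ⊆ Icc a b) (hKT : Icc a b ⊆ closure T) :
    ∀ᵐ ω ∂P, ∀ y, (∃ s ∈ Icc a b, y + B s ω = 0) ↔
      ∀ k : ℕ, ∃ t ∈ T, |y + B t ω| < ((k : ℝ) + 1)⁻¹ := by
  filter_upwards [hB.cont] with ω hω y
  rw [exists_eq_zero_iff_forall_exists_abs_lt (f := fun s => y + B s ω) isCompact_Icc hTK hKT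
    (continuousOn_const.add (hω.mono fun s hs => ha.trans hs.1))]
  refine ⟨fun h k => h _ (by positivity), fun h ε hε => ?_⟩
  obtain ⟨k, hk⟩ := exists_nat_one_div_lt hε
  obtain ⟨t, ht, hlt⟩ := h k
  exact ⟨t, ht, hlt.trans (by simpa using hk)⟩

end Brownian

theorem stmt_0_general {Ω : Type} [MeasurableSpace Ω] (P : Measure Ω) (B : ℝ → Ω → ℝ)
    (hB : IsStdBM P B) (x : ℝ) (a b : ℝ) (ha : 0 ≤ a) :
    P {ω | ∃ s ∈ Icc a b, x + B s ω = 0} ≤ P {ω | ∃ s ∈ Icc a b, B s ω = 0} := by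
  have hP := hB.isProb
  obtain ⟨T, hTK, hTc, hKT⟩ :=
    (TopologicalSpace.IsSeparable.of_separableSpace (Icc a b)).exists_countable_dense_subset
  set E : ℝ → ℕ → Set Ω := fun y k => {ω | ∃ t ∈ T, |y + B t ω| < ((k : ℝ) + 1)⁻¹}
  have hzero := hB.ae_exists_eq_zero_iff ha hTK hKT
  have hanti : Antitone (E 0) := fun k l hkl ω ⟨t, ht, h⟩ => ⟨t, ht, h.trans_le (by gcongr)⟩
  calc P {ω | ∃ s ∈ Icc a b, x + B s ω = 0}
      ≤ P (⋂ k, E x k) := measure_mono_ae <| hzero.mono fun ω h hω =>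
        show ω ∈ ⋂ k, E x k from mem_iInter.2 ((h x).1 hω)
    _ ≤ ⨅ k, P (E x k) := le_iInf fun k => measure_mono (iInter_subset _ k)
    _ ≤ ⨅ k, P (E 0 k) := iInf_mono fun k =>
      hB.symmDecreasing_measure_exists_mem hTc (fun t ht => ha.trans (hTK ht).1) _ (by simp)
    _ = P (⋂ k, E 0 k) := (hanti.measure_iInter (fun k =>
      (hB.measurableSet_exists_mem_abs_add_lt hTc 0 _).nullMeasurableSet)
      ⟨0, measure_ne_top _ _⟩).symm
    _ ≤ P {ω | ∃ s ∈ Icc a b, B s ω = 0} := measure_mono_ae <| hzero.mono fun ω h hω =>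
      show ∃ s ∈ Icc a b, B s ω = 0 by simpa using (h 0).2 (mem_iInter.1 hω)

/-- The probability that Brownian motion started at `0` has a zero in `[a,b]`
is at least the probability that Brownian motion started at `x` has a zero in `[a,b]`. -/
theorem stmt_0 {Ω : Type} [MeasurableSpace Ω] (P : Measure Ω) (B : ℝ → Ω → ℝ)
    (hB : IsStdBM P B) (x : ℝ) (a b : ℝ) (ha : 0 ≤ a) (hab : a ≤ b) :
    P {ω | ∃ s ∈ Icc a b, x + B s ω = 0} ≤ P {ω | ∃ s ∈ Icc a b, B s ω = 0} :=
  stmt_0_general P B hB x a b ha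
end

section
/- Let β > α ≥ 0 and let μ be a finite Borel measure on ℝ such that μ(A) ≤ c·|A|^β for every interval A (where |A| denotes the length of A) and some constant c > 0. Then μ has finite α-energy, i.e., ∫∫ |x−y|^{−α} dμ(x) dμ(y) < ∞. -/
open MeasureTheory Set
open scoped ENNReal

/-!
By the layer-cake formula, `∫ |x - y|^(-α) dμ(y) = ∫₀^∞ μ{y : |x - y|^(-α) > t} dt`. For `t > 1`
the superlevel set is an interval of length `2 t^(-1/α)`, so the growth bound gives it measure
`≲ t^(-β/α)`, which is integrable on `(1, ∞)` because `β/α > 1`; for `t ≤ 1` we use `μ(ℝ)`.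
The inner integral is thus bounded uniformly in `x`, and `μ` is finite.
-/

section Frostman

variable {μ : Measure ℝ} {α β c : ℝ}

lemma measure_singleton_eq_zero_of_le_rpow (hβ : 0 < β)
    (hμ : ∀ x y : ℝ, x ≤ y → μ (Icc x y) ≤ ENNReal.ofReal (c * (y - x) ^ β)) (x : ℝ) :
    μ {x} = 0 := by
  simpa [Real.zero_rpow hβ.ne'] using hμ x x le_rfl

lemma setOf_lt_abs_sub_rpow_neg_subset_Icc (hα : 0 < α) {t : ℝ} (ht : 0 < t) (x : ℝ) :
    {y : ℝ | t < |x - y| ^ (-α)} ⊆ Icc (x - t ^ (-α)⁻¹) (x + t ^ (-α)⁻¹) := by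
  intro y (hy : t < |x - y| ^ (-α))
  have hxy : 0 < |x - y| := by
    refine (abs_nonneg _).lt_of_ne fun h ↦ ?_
    rw [← h, Real.zero_rpow (neg_ne_zero.mpr hα.ne')] at hy
    exact ht.not_gt hy
  have hlt := abs_lt.mp <| (Real.lt_rpow_inv_iff_of_neg hxy ht (neg_neg_of_pos hα)).mpr hy
  constructor <;> linarith [hlt.1, hlt.2]

lemma measure_setOf_lt_abs_sub_rpow_neg_le (hα : 0 < α)
    (hμ : ∀ x y : ℝ, x ≤ y → μ (Icc x y) ≤ ENNReal.ofReal (c * (y - x) ^ β))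
    {t : ℝ} (ht : 0 < t) (x : ℝ) :
    μ {y : ℝ | t < |x - y| ^ (-α)} ≤ ENNReal.ofReal (c * 2 ^ β * t ^ (-(β / α))) := by
  have hs : 0 ≤ t ^ (-α)⁻¹ := Real.rpow_nonneg ht.le _
  calc μ {y : ℝ | t < |x - y| ^ (-α)}
      ≤ μ (Icc (x - t ^ (-α)⁻¹) (x + t ^ (-α)⁻¹)) :=
        measure_mono (setOf_lt_abs_sub_rpow_neg_subset_Icc hα ht x)
    _ ≤ ENNReal.ofReal (c * ((x + t ^ (-α)⁻¹) - (x - t ^ (-α)⁻¹)) ^ β) := hμ _ _ (by linarith)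
    _ = ENNReal.ofReal (c * 2 ^ β * t ^ (-(β / α))) := by
      rw [add_sub_sub_cancel, ← two_mul, Real.mul_rpow zero_le_two hs, ← Real.rpow_mul ht.le,
        mul_assoc, inv_neg, neg_mul, ← div_eq_inv_mul]

lemma lintegral_abs_sub_rpow_neg_le (hα : 0 < α) (hβ : 0 < β)
    (hμ : ∀ x y : ℝ, x ≤ y → μ (Icc x y) ≤ ENNReal.ofReal (c * (y - x) ^ β)) (x : ℝ) :
    ∫⁻ y, ENNReal.ofReal |x - y| ^ (-α) ∂μ ≤
      μ univ + ∫⁻ t in Ioi 1, ENNReal.ofReal (c * 2 ^ β * t ^ (-(β / α))) := by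
  -- In `ℝ≥0∞`, `0 ^ (-α) = ∞`, while in `ℝ` it is `0`; the two integrands differ only at `y = x`.
  have hae : ∀ᵐ y ∂μ, ENNReal.ofReal |x - y| ^ (-α) = ENNReal.ofReal (|x - y| ^ (-α)) := by
    have : ∀ᵐ y ∂μ, y ≠ x := by
      simpa [ae_iff] using measure_singleton_eq_zero_of_le_rpow hβ hμ x
    filter_upwards [this] with y hy
    exact ENNReal.ofReal_rpow_of_pos (abs_pos.mpr (sub_ne_zero.mpr hy.symm))
  rw [lintegral_congr_ae hae, lintegral_eq_lintegral_meas_lt μ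
      (.of_forall fun y ↦ Real.rpow_nonneg (abs_nonneg _) _) (by fun_prop),
    ← Ioc_union_Ioi_eq_Ioi zero_le_one, lintegral_union measurableSet_Ioi (Ioc_disjoint_Ioi le_rfl)]
  refine add_le_add ?_ <| setLIntegral_mono ((measurable_id.pow_const _).const_mul _).ennreal_ofReal
    fun t ht ↦ measure_setOf_lt_abs_sub_rpow_neg_le hα hμ (zero_lt_one.trans ht) x
  calc ∫⁻ t in Ioc (0 : ℝ) 1, μ {y | t < |x - y| ^ (-α)}
      ≤ ∫⁻ _ in Ioc (0 : ℝ) 1, μ univ := lintegral_mono fun _ ↦ measure_mono (subset_univ _)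
    _ = μ univ := by simp

lemma setLIntegral_Ioi_one_rpow_lt_top (hα : 0 < α) (hαβ : α < β) (K : ℝ) :
    ∫⁻ t in Ioi 1, ENNReal.ofReal (K * t ^ (-(β / α))) < ∞ := by
  have hexp : -(β / α) < -1 := neg_lt_neg ((one_lt_div hα).mpr hαβ)
  exact Integrable.lintegral_lt_top ((integrableOn_Ioi_rpow_of_lt hexp one_pos).const_mul _)

lemma exists_lintegral_abs_sub_rpow_neg_le [IsFiniteMeasure μ] (hα : 0 ≤ α) (hαβ : α < β)
    (hμ : ∀ x y : ℝ, x ≤ y → μ (Icc x y) ≤ ENNReal.ofReal (c * (y - x) ^ β)) :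
    ∃ C < ∞, ∀ x, ∫⁻ y, ENNReal.ofReal |x - y| ^ (-α) ∂μ ≤ C := by
  rcases hα.eq_or_lt with rfl | hα
  · exact ⟨μ univ, measure_lt_top _ _, fun x ↦ by simp⟩
  exact ⟨_, ENNReal.add_lt_top.mpr ⟨measure_lt_top _ _, setLIntegral_Ioi_one_rpow_lt_top hα hαβ _⟩,
    lintegral_abs_sub_rpow_neg_le hα (hα.trans hαβ) hμ⟩

end Frostman

theorem stmt_2_general (μ : Measure ℝ) [IsFiniteMeasure μ] (α β c : ℝ)
    (hα : 0 ≤ α) (hβ : α < β)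
    (hμ : ∀ x y : ℝ, x ≤ y → μ (Icc x y) ≤ ENNReal.ofReal (c * (y - x) ^ β)) :
    ∫⁻ x, ∫⁻ y, (ENNReal.ofReal |x - y|) ^ (-α) ∂μ ∂μ < ⊤ := by
  obtain ⟨C, hC, hle⟩ := exists_lintegral_abs_sub_rpow_neg_le hα hβ hμ
  calc ∫⁻ x, ∫⁻ y, (ENNReal.ofReal |x - y|) ^ (-α) ∂μ ∂μ ≤ ∫⁻ _, C ∂μ := lintegral_mono hle
    _ = C * μ univ := lintegral_const C
    _ < ⊤ := ENNReal.mul_lt_top hC (measure_lt_top _ _)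

/-- If `β > α ≥ 0` and `μ` is a finite Borel measure on `ℝ` with
`μ(A) ≤ c·|A|^β` for every interval `A`, then `μ` has finite `α`-energy:
`∫∫ |x−y|^(−α) dμ(x) dμ(y) < ∞`. -/
theorem stmt_2 (μ : Measure ℝ) [IsFiniteMeasure μ] (α β c : ℝ)
    (hα : 0 ≤ α) (hβ : α < β) (hc : 0 < c)
    (hμ : ∀ x y : ℝ, x ≤ y → μ (Icc x y) ≤ ENNReal.ofReal (c * (y - x) ^ β)) :
    ∫⁻ x, ∫⁻ y, (ENNReal.ofReal |x - y|) ^ (-α) ∂μ ∂μ < ⊤ :=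
  stmt_2_general μ α β c hα hβ hμ
end

section
/- Let α > 0, let f : ℕ → ℕ be a function such that Σ_n 2^{−f(n)} < ∞, and let μ be a Borel measure on [0,1] such that for every n and every interval A of length at most 2^{−n}, μ(A) ≤ 2^{−α·n − f(n)}. Then μ has finite α-energy, i.e., ∫∫ |x−y|^{−α} dμ(x) dμ(y) < ∞. -/
/-!
Split `|x - y|` into dyadic scales: `d ^ (-α) ≤ 2 ^ α + ∑ₙ 2 ^ (α (n + 2)) 𝟙[d ≤ 2 ^ (-(n + 1))]`.
Integrating in `y` bounds the potential `∫ |x - y| ^ (-α) dμ(y)` by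
`2 ^ α μ(ℝ) + ∑ₙ 2 ^ (α (n + 2)) μ(B(x, 2 ^ (-(n + 1))))`, and the ball bound turns the `n`-th
term into `4 ^ α 2 ^ (-f n)`. So the potential is bounded uniformly in `x`, and `μ` is finite.
-/

open MeasureTheory Set Metric
open scoped ENNReal

theorem ENNReal.rpow_neg_le_of_le {a t : ℝ≥0∞} {α : ℝ} (hα : 0 ≤ α) (h : a ≤ t) :
    t ^ (-α) ≤ a ^ (-α) := by
  rw [ENNReal.rpow_neg, ENNReal.rpow_neg]
  exact ENNReal.inv_le_inv.2 (ENNReal.rpow_le_rpow h hα)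

theorem ENNReal.rpow_neg_le_add_tsum_indicator {α : ℝ} (hα : 0 ≤ α) (t : ℝ≥0∞) :
    t ^ (-α) ≤ 2 ^ α + ∑' n : ℕ,
      (Iic (2 ^ (n + 1) : ℝ≥0∞)⁻¹).indicator (fun _ => (2 ^ (n + 2) : ℝ≥0∞) ^ α) t := by
  rcases eq_or_ne t 0 with rfl | ht
  · have hsum : ∑' n : ℕ, (2 ^ (n + 2) : ℝ≥0∞) ^ α = ∞ := by
      refine top_le_iff.1 <| (ENNReal.tsum_const_eq_top_of_ne_zero one_ne_zero).symm.le.trans <|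
        ENNReal.tsum_le_tsum fun n => ?_
      rw [← ENNReal.one_rpow α]
      exact ENNReal.rpow_le_rpow (one_le_pow₀ one_le_two) hα
    simp [hsum]
  have hex : ∃ n : ℕ, (2 ^ (n + 1) : ℝ≥0∞)⁻¹ < t := by
    obtain ⟨n, hn⟩ := ENNReal.exists_inv_two_pow_lt ht
    exact ⟨n, lt_of_le_of_lt (by rw [← ENNReal.inv_pow]; gcongr <;> simp) hn⟩
  classical
  obtain ⟨k, hk, hmin⟩ : ∃ k : ℕ, (2 ^ (k + 1) : ℝ≥0∞)⁻¹ < t ∧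
      ∀ m < k, ¬ (2 ^ (m + 1) : ℝ≥0∞)⁻¹ < t :=
    ⟨Nat.find hex, Nat.find_spec hex, fun m => Nat.find_min hex⟩
  have hpow : t ^ (-α) ≤ (2 ^ (k + 1) : ℝ≥0∞) ^ α := by
    refine (ENNReal.rpow_neg_le_of_le hα hk.le).trans_eq ?_
    rw [ENNReal.inv_rpow, ENNReal.rpow_neg, inv_inv]
  rcases k with _ | m
  · exact le_add_right (by simpa using hpow)
  · have hle : t ∈ Iic (2 ^ (m + 1) : ℝ≥0∞)⁻¹ := not_lt.1 (hmin m m.lt_succ_self)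
    calc t ^ (-α)
        ≤ (Iic (2 ^ (m + 1) : ℝ≥0∞)⁻¹).indicator (fun _ => (2 ^ (m + 2) : ℝ≥0∞) ^ α) t := by
          rwa [indicator_of_mem hle]
      _ ≤ ∑' n : ℕ,
          (Iic (2 ^ (n + 1) : ℝ≥0∞)⁻¹).indicator (fun _ => (2 ^ (n + 2) : ℝ≥0∞) ^ α) t :=
          ENNReal.le_tsum m
      _ ≤ _ := le_add_self

section Energy

variable {X : Type*} [PseudoEMetricSpace X] [MeasurableSpace X] [OpensMeasurableSpace X]

theorem lintegral_edist_rpow_neg_le {α : ℝ} (hα : 0 ≤ α) (μ : Measure X) (x : X) :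
    ∫⁻ y, edist x y ^ (-α) ∂μ ≤
      2 ^ α * μ univ + ∑' n : ℕ, (2 ^ (n + 2) : ℝ≥0∞) ^ α * μ (closedEBall x (2 ^ (n + 1))⁻¹) := by
  have hball : ∀ n : ℕ, MeasurableSet (closedEBall x (2 ^ (n + 1))⁻¹) := fun n =>
    isClosed_closedEBall.measurableSet
  have hind : ∀ (n : ℕ) (y : X),
      (Iic (2 ^ (n + 1) : ℝ≥0∞)⁻¹).indicator (fun _ => (2 ^ (n + 2) : ℝ≥0∞) ^ α) (edist x y) =
        (closedEBall x (2 ^ (n + 1))⁻¹).indicator (fun _ => (2 ^ (n + 2) : ℝ≥0∞) ^ α) y := by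
    intro n y
    simp only [indicator, mem_Iic, mem_closedEBall, edist_comm]
  calc ∫⁻ y, edist x y ^ (-α) ∂μ
      ≤ ∫⁻ y, 2 ^ α + ∑' n : ℕ,
          (closedEBall x (2 ^ (n + 1))⁻¹).indicator (fun _ => (2 ^ (n + 2) : ℝ≥0∞) ^ α) y ∂μ :=
        lintegral_mono fun y => by
          simpa only [hind] using ENNReal.rpow_neg_le_add_tsum_indicator hα (edist x y)
    _ = _ := by
        rw [lintegral_add_left measurable_const, lintegral_const,
          lintegral_tsum fun n => (measurable_const.indicator (hball n)).aemeasurable]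
        simp only [lintegral_indicator_const (hball _)]

theorem lintegral_lintegral_edist_rpow_neg_lt_top {α : ℝ} (hα : 0 ≤ α) (μ : Measure X)
    [IsFiniteMeasure μ] {ε : ℕ → ℝ≥0∞} (hε : ∑' n, ε n ≠ ∞)
    (hball : ∀ (n : ℕ) (x : X), μ (closedEBall x (2 ^ (n + 1))⁻¹) ≤ ((2 ^ n : ℝ≥0∞) ^ α)⁻¹ * ε n) :
    ∫⁻ x, ∫⁻ y, edist x y ^ (-α) ∂μ ∂μ < ∞ := by
  have hcoef : ∀ n : ℕ, (2 ^ (n + 2) : ℝ≥0∞) ^ α * ((2 ^ n : ℝ≥0∞) ^ α)⁻¹ = 4 ^ α := by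
    intro n
    rw [pow_add, ENNReal.mul_rpow_of_nonneg _ _ hα, mul_right_comm,
      ENNReal.mul_inv_cancel (ENNReal.rpow_pos (by positivity) (by simp)).ne'
        (ENNReal.rpow_ne_top_of_nonneg hα (by simp)), one_mul]
    norm_num
  have hinner : ∀ x, ∫⁻ y, edist x y ^ (-α) ∂μ ≤ 2 ^ α * μ univ + 4 ^ α * ∑' n, ε n := by
    intro x
    refine (lintegral_edist_rpow_neg_le hα μ x).trans ?_
    gcongr 2 ^ α * μ univ + ?_
    rw [← ENNReal.tsum_mul_left]
    refine ENNReal.tsum_le_tsum fun n => ?_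
    calc _ ≤ (2 ^ (n + 2) : ℝ≥0∞) ^ α * (((2 ^ n : ℝ≥0∞) ^ α)⁻¹ * ε n) := by gcongr; exact hball n x
      _ = _ := by rw [← mul_assoc, hcoef]
  calc ∫⁻ x, ∫⁻ y, edist x y ^ (-α) ∂μ ∂μ ≤ ∫⁻ _, 2 ^ α * μ univ + 4 ^ α * ∑' n, ε n ∂μ :=
        lintegral_mono hinner
    _ < ∞ := by
        rw [lintegral_const]
        refine ENNReal.mul_lt_top ?_ (measure_lt_top μ univ)
        have := hε.lt_top
        finiteness

end Energy

theorem Real.closedEBall_inv_two_pow (x : ℝ) (n : ℕ) :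
    closedEBall x (2 ^ (n + 1))⁻¹ = Icc (x - (2 ^ (n + 1))⁻¹) (x + (2 ^ (n + 1))⁻¹) := by
  have hr : ((2 : ℝ≥0∞) ^ (n + 1))⁻¹ = ENNReal.ofReal ((2 ^ (n + 1))⁻¹) := by
    rw [ENNReal.ofReal_inv_of_pos (by positivity), ENNReal.ofReal_pow zero_le_two,
      ENNReal.ofReal_ofNat]
  rw [hr, closedEBall_ofReal (by positivity), Real.closedBall_eq_Icc]

theorem Real.measure_closedEBall_inv_two_pow_le {μ : Measure ℝ} {b : ℕ → ℝ≥0∞}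
    (h : ∀ (n : ℕ) (x y : ℝ), x ≤ y → y - x ≤ (2 : ℝ) ^ (-(n : ℝ)) → μ (Icc x y) ≤ b n)
    (n : ℕ) (x : ℝ) : μ (closedEBall x (2 ^ (n + 1))⁻¹) ≤ b n := by
  have hlen : x + (2 ^ (n + 1))⁻¹ - (x - (2 ^ (n + 1))⁻¹) = (2 : ℝ) ^ (-(n : ℝ)) := by
    rw [Real.rpow_neg zero_le_two, Real.rpow_natCast, pow_succ]
    field_simp
    ring
  rw [Real.closedEBall_inv_two_pow]
  exact h n _ _ (by linarith [inv_pos.2 (pow_pos (two_pos (α := ℝ)) (n + 1))]) hlen.le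

/-- Refined energy estimate: if `Σ_n 2^(−f n) < ∞` and `μ` is a Borel measure on
`[0,1]` with `μ(A) ≤ 2^(−α·n − f n)` for every interval `A` of length at most
`2^(−n)`, then `μ` has finite `α`-energy. -/
theorem stmt_3 (α : ℝ) (hα : 0 < α) (f : ℕ → ℕ)
    (hf : Summable fun n : ℕ => (2 : ℝ) ^ (-(f n : ℝ)))
    (μ : Measure ℝ) (hsupp : μ (Icc (0 : ℝ) 1)ᶜ = 0)
    (hμ : ∀ (n : ℕ) (x y : ℝ), x ≤ y → y - x ≤ (2 : ℝ) ^ (-(n : ℝ)) →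
      μ (Icc x y) ≤ ENNReal.ofReal ((2 : ℝ) ^ (-(α * n) - (f n : ℝ)))) :
    ∫⁻ x, ∫⁻ y, (ENNReal.ofReal |x - y|) ^ (-α) ∂μ ∂μ < ⊤ := by
  have : IsFiniteMeasure μ := by
    refine ⟨?_⟩
    rw [← measure_add_measure_compl measurableSet_Icc, hsupp, add_zero]
    have hI : μ (Icc 0 1) ≤ ENNReal.ofReal ((2 : ℝ) ^ (-(α * 0) - (f 0 : ℝ))) := by
      simpa using hμ 0 0 1 zero_le_one (by norm_num)
    exact hI.trans_lt ENNReal.ofReal_lt_top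
  have hmass : ∀ n : ℕ, ENNReal.ofReal ((2 : ℝ) ^ (-(α * n) - (f n : ℝ))) =
      ((2 ^ n : ℝ≥0∞) ^ α)⁻¹ * ENNReal.ofReal (2 ^ (-(f n : ℝ))) := by
    intro n
    rw [sub_eq_add_neg, Real.rpow_add two_pos, ENNReal.ofReal_mul (by positivity),
      ← ENNReal.ofReal_rpow_of_pos two_pos, ENNReal.ofReal_ofNat, ENNReal.rpow_neg, mul_comm α,
      ENNReal.rpow_natCast_mul, mul_comm]
  have hsum : ∑' n, ENNReal.ofReal (2 ^ (-(f n : ℝ))) ≠ ⊤ := by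
    rw [← ENNReal.ofReal_tsum_of_nonneg (fun _ => by positivity) hf]
    exact ENNReal.ofReal_ne_top
  simp_rw [← Real.dist_eq, ← edist_dist]
  simp only [hmass] at hμ
  exact lintegral_lintegral_edist_rpow_neg_lt_top hα.le μ hsum
    (Real.measure_closedEBall_inv_two_pow_le hμ)
end

section
/- Let B be a standard one-dimensional Brownian motion started at 0. Let β > 1/2 and let μ be a finite Borel measure on [0,1] such that μ(I) ≤ c·|I|^β for every dyadic interval I and some fixed constant c > 0. Then there exists a constant c' > 0 (depending only on c and β) such that for every set A ⊆ [1/2, 1] which is a countable union of closed dyadic intervals, P(∃ t ∈ A, B(t) = 0) ≥ c' · μ(A)². -/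
open MeasureTheory ProbabilityTheory Set

/-- The closed dyadic interval `[k·2^(−n), (k+1)·2^(−n)]`. -/
def dyadicIcc (n k : ℕ) : Set ℝ := Icc ((k : ℝ) / 2 ^ n) (((k : ℝ) + 1) / 2 ^ n)

/-!
Second moment method. For `ε > 0` let `Z_ε = μ {t ∈ A | |B t| ≤ ε}`. As `B t` is a centred Gaussian
of variance `t ∈ [1/2, 1]`, `E Z_ε ≳ ε μ(A)`. Independence of the increments gives
`P(|B s| ≤ ε, |B t| ≤ ε) ≲ ε² |t - s|^(-1/2)`, so `E Z_ε² ≲ ε² ∫∫ |t - s|^(-1/2) dμ dμ`; this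
energy is finite because the sum of `μ(I) ≤ c |I|^β` against `|I|^(-1/2)` over dyadic scales is
a geometric series of ratio `2^(1/2 - β) < 1`. Cauchy–Schwarz (Paley–Zygmund) then bounds `P(Z_ε > 0) ≥ (E Z_ε)² / E Z_ε²` below by a
multiple of `μ(A)²`, uniformly in `ε`. Letting `ε → 0` along a decreasing sequence of events, a path
that is continuous on a compact `K ⊆ A` and comes within every `ε` of `0` on `K` vanishes on `K`;
inner regularity of `μ` passes from compact `K` to `A`.
-/

open Filter
open scoped ENNReal NNReal Topology

section SecondMoment

variable {Ω T : Type*} [MeasurableSpace Ω] [MeasurableSpace T]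

theorem sq_lintegral_le_lintegral_sq_mul_measure_pos (P : Measure Ω) {Z : Ω → ℝ≥0∞}
    (hZ : Measurable Z) : (∫⁻ ω, Z ω ∂P) ^ 2 ≤ (∫⁻ ω, Z ω ^ 2 ∂P) * P {ω | 0 < Z ω} := by
  set S := {ω | 0 < Z ω}
  have hS : MeasurableSet S := measurableSet_lt measurable_const hZ
  have hZS : Z = Z * S.indicator 1 := by
    ext ω
    by_cases h : ω ∈ S
    · simp [h]
    · simp [h, show Z ω = 0 by simpa [S] using h]
  have hsq : ∀ x : ℝ≥0∞, (x ^ (1 / 2 : ℝ)) ^ 2 = x := fun x => by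
    rw [← ENNReal.rpow_natCast, ← ENNReal.rpow_mul]; norm_num
  have hcs := ENNReal.lintegral_mul_le_Lp_mul_Lq P (p := 2) (q := 2)
    (by norm_num [Real.holderConjugate_iff]) (g := S.indicator 1) hZ.aemeasurable
    (measurable_const.indicator hS).aemeasurable
  rw [← hZS] at hcs
  calc (∫⁻ ω, Z ω ∂P) ^ 2
      ≤ ((∫⁻ ω, Z ω ^ (2 : ℝ) ∂P) ^ (1 / 2 : ℝ) *
          (∫⁻ ω, S.indicator 1 ω ^ (2 : ℝ) ∂P) ^ (1 / 2 : ℝ)) ^ 2 :=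
        pow_le_pow_left' hcs 2
    _ = _ := by
        rw [mul_pow, hsq, hsq]
        congr 1
        · simp_rw [ENNReal.rpow_two]
        · have h1 (ω : Ω) : S.indicator (1 : Ω → ℝ≥0∞) ω ^ (2 : ℝ) = S.indicator 1 ω := by
            by_cases h : ω ∈ S <;> simp [h]
          simp_rw [h1, lintegral_indicator_one hS]

theorem sq_lintegral_measure_section_le (P : Measure Ω) [SFinite P] (ν : Measure T) [SFinite ν]
    {E : Set (T × Ω)} (hE : MeasurableSet E) :
    (∫⁻ t, P (Prod.mk t ⁻¹' E) ∂ν) ^ 2 ≤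
      (∫⁻ t, ∫⁻ s, P (Prod.mk t ⁻¹' E ∩ Prod.mk s ⁻¹' E) ∂ν ∂ν) *
        P {ω | 0 < ν ((·, ω) ⁻¹' E)} := by
  set Z : Ω → ℝ≥0∞ := fun ω => ν ((·, ω) ⁻¹' E)
  have hmean : ∫⁻ ω, Z ω ∂P = ∫⁻ t, P (Prod.mk t ⁻¹' E) ∂ν := by
    rw [← Measure.prod_apply_symm hE, Measure.prod_apply hE]
  set F : Set ((T × T) × Ω) := {q | (q.1.1, q.2) ∈ E ∧ (q.1.2, q.2) ∈ E}
  have hF : MeasurableSet F :=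
    (hE.preimage (measurable_fst.fst.prodMk measurable_snd)).inter
      (hE.preimage (measurable_fst.snd.prodMk measurable_snd))
  have hsecond : ∫⁻ ω, Z ω ^ 2 ∂P = ∫⁻ t, ∫⁻ s, P (Prod.mk t ⁻¹' E ∩ Prod.mk s ⁻¹' E) ∂ν ∂ν := by
    have hZF (ω : Ω) : Z ω ^ 2 = ν.prod ν ((·, ω) ⁻¹' F) := by
      rw [sq, ← Measure.prod_prod]; rfl
    simp_rw [hZF]
    rw [← Measure.prod_apply_symm hF, Measure.prod_apply hF,
      lintegral_prod _ (measurable_measure_prodMk_left hF).aemeasurable]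
    rfl
  rw [← hmean, ← hsecond]
  exact sq_lintegral_le_lintegral_sq_mul_measure_pos P (measurable_measure_prodMk_right hE)

end SecondMoment

theorem exists_continuous_modification {Ω : Type*} [MeasurableSpace Ω] {P : Measure Ω}
    {B : ℝ → Ω → ℝ} (hmeas : ∀ t, Measurable (B t))
    (hcont : ∀ᵐ ω ∂P, ContinuousOn (fun t => B t ω) (Ici 0)) :
    ∃ X : ℝ → Ω → ℝ, Measurable (Function.uncurry X) ∧ (∀ ω, Continuous fun t => X t ω) ∧
      ∀ᵐ ω ∂P, ∀ t, 0 ≤ t → X t ω = B t ω := by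
  classical
  set N := toMeasurable P {ω | ¬ContinuousOn (fun t => B t ω) (Ici 0)}
  have hXcont (ω : Ω) : Continuous fun t => if ω ∈ N then 0 else B (max t 0) ω := by
    by_cases hω : ω ∈ N
    · simp only [hω, if_true]; exact continuous_const
    · simp only [hω, if_false]
      have : ContinuousOn (fun t => B t ω) (Ici 0) :=
        by_contra fun h => hω (subset_toMeasurable _ _ h)
      exact this.comp_continuous (continuous_id.max continuous_const) fun t => le_max_right t 0
  refine ⟨fun t ω => if ω ∈ N then 0 else B (max t 0) ω,
    measurable_uncurry_of_continuous_of_measurable hXcont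
      fun t => Measurable.ite (measurableSet_toMeasurable _ _) measurable_const (hmeas _),
    hXcont, ?_⟩
  have hN : ∀ᵐ ω ∂P, ω ∉ N :=
    measure_eq_zero_iff_ae_notMem.mp (by rw [measure_toMeasurable]; exact ae_iff.mp hcont)
  filter_upwards [hN] with ω hω t ht
  simp [hω, max_eq_left ht]

theorem IsCompact.exists_eq_zero_of_forall_abs_le {α : Type*} [TopologicalSpace α] {A : Set α}
    (hA : IsCompact A) {f : α → ℝ} (hf : ContinuousOn f A)
    (h : ∀ n : ℕ, ∃ t ∈ A, |f t| ≤ 1 / (n + 1)) : ∃ t ∈ A, f t = 0 := by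
  obtain ⟨t₀, ht₀, hmin⟩ :=
    hA.exists_isMinOn ((h 0).imp fun _ ht => ht.1) (continuous_abs.comp_continuousOn hf)
  refine ⟨t₀, ht₀, abs_eq_zero.mp (le_antisymm ?_ (abs_nonneg _))⟩
  refine ge_of_tendsto' tendsto_one_div_add_atTop_nhds_zero_nat fun n => ?_
  obtain ⟨t, ht, hft⟩ := h n
  exact (hmin ht).trans hft

section Hitting

variable {Ω : Type*} [MeasurableSpace Ω] (P : Measure Ω) (μ : Measure ℝ) {a M : ℝ≥0∞}

theorem sq_mul_le_mul_measure_restrict_pos [SFinite P] [SFinite μ] {X : ℝ → Ω → ℝ}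
    (hX : Measurable (Function.uncurry X)) {A : Set ℝ} (hA : MeasurableSet A) {ε : ℝ}
    (hε : 0 < ε)
    (hlow : ∀ t ∈ A, ENNReal.ofReal ε * a ≤ P {ω | |X t ω| ≤ ε})
    (hup : ∫⁻ t in A, ∫⁻ s in A, P ({ω | |X t ω| ≤ ε} ∩ {ω | |X s ω| ≤ ε}) ∂μ ∂μ ≤
      ENNReal.ofReal ε ^ 2 * M) :
    (a * μ A) ^ 2 ≤ M * P {ω | 0 < μ.restrict A {t | |X t ω| ≤ ε}} := by
  have hE : MeasurableSet {p : ℝ × Ω | |X p.1 p.2| ≤ ε} :=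
    measurableSet_le hX.abs measurable_const
  have hmean : ENNReal.ofReal ε * a * μ A ≤ ∫⁻ t in A, P {ω | |X t ω| ≤ ε} ∂μ := by
    rw [← setLIntegral_const]
    exact setLIntegral_mono' hA hlow
  have hε0 : ENNReal.ofReal ε ^ 2 ≠ 0 := by positivity
  rw [← ENNReal.mul_le_mul_iff_right hε0 (by simp), ← mul_assoc]
  calc ENNReal.ofReal ε ^ 2 * (a * μ A) ^ 2 = (ENNReal.ofReal ε * a * μ A) ^ 2 := by ring
    _ ≤ (∫⁻ t in A, P {ω | |X t ω| ≤ ε} ∂μ) ^ 2 := pow_le_pow_left' hmean 2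
    _ ≤ _ := sq_lintegral_measure_section_le P (μ.restrict A) hE
    _ ≤ _ := mul_le_mul' hup le_rfl

variable [IsFiniteMeasure P] {B : ℝ → Ω → ℝ}

lemma le_mul_measure_iInter_of_antitone {S : ℕ → Set Ω} (hS : ∀ n, MeasurableSet (S n))
    (hanti : Antitone S) {x : ℝ≥0∞} (hM : M ≠ ⊤) (h : ∀ n, x ≤ M * P (S n)) :
    x ≤ M * P (⋂ n, S n) :=
  ge_of_tendsto (ENNReal.Tendsto.const_mul (tendsto_measure_iInter_atTop
    (fun n => (hS n).nullMeasurableSet) hanti ⟨0, measure_ne_top P _⟩) (Or.inr hM))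
    (Eventually.of_forall h)

theorem IsCompact.sq_mul_le_mul_measure_exists_eq_zero {A : Set ℝ} (hA : IsCompact A)
    (hA0 : A ⊆ Ici 0) [SFinite μ] (hmeas : ∀ t, Measurable (B t))
    (hcont : ∀ᵐ ω ∂P, ContinuousOn (fun t => B t ω) (Ici 0)) (hM : M ≠ ⊤)
    (hlow : ∀ ε, 0 < ε → ε ≤ 1 → ∀ t ∈ A, ENNReal.ofReal ε * a ≤ P {ω | |B t ω| ≤ ε})
    (hup : ∀ ε, 0 < ε → ε ≤ 1 →
      ∫⁻ t in A, ∫⁻ s in A, P ({ω | |B t ω| ≤ ε} ∩ {ω | |B s ω| ≤ ε}) ∂μ ∂μ ≤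
        ENNReal.ofReal ε ^ 2 * M) :
    (a * μ A) ^ 2 ≤ M * P {ω | ∃ t ∈ A, B t ω = 0} := by
  -- `B` need not be jointly measurable: pass to a continuous modification `X`.
  obtain ⟨X, hXm, hXc, hXB⟩ := exists_continuous_modification hmeas hcont
  have hsec (ε : ℝ) {t : ℝ} (ht : t ∈ A) : {ω | |X t ω| ≤ ε} =ᵐ[P] {ω | |B t ω| ≤ ε} := by
    filter_upwards [hXB] with ω hω
    change (|X t ω| ≤ ε) = (|B t ω| ≤ ε)
    rw [hω t (hA0 ht)]
  set S : ℕ → Set Ω := fun n => {ω | 0 < μ.restrict A {t | |X t ω| ≤ 1 / (n + 1)}}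
  have hlevel (n : ℕ) : (a * μ A) ^ 2 ≤ M * P (S n) := by
    have hε : (0 : ℝ) < 1 / (n + 1) := by positivity
    have hε1 : (1 : ℝ) / (n + 1) ≤ 1 := div_le_one_of_le₀ (by simp) (by positivity)
    refine sq_mul_le_mul_measure_restrict_pos P μ hXm hA.measurableSet hε
      (fun t ht => (hlow _ hε hε1 t ht).trans (measure_congr (hsec _ ht)).ge) ?_
    refine le_trans (le_of_eq ?_) (hup _ hε hε1)
    refine setLIntegral_congr_fun hA.measurableSet fun t ht => ?_
    exact setLIntegral_congr_fun hA.measurableSet fun s hs =>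
      measure_congr ((hsec _ ht).inter (hsec _ hs))
  have hanti : Antitone S := by
    intro n m hnm ω hω
    simp only [S, mem_ofPred_eq] at hω ⊢
    exact hω.trans_le <| measure_mono fun t (ht : |X t ω| ≤ _) =>
      show |X t ω| ≤ _ from ht.trans (by gcongr)
  have hS (n : ℕ) : MeasurableSet (S n) :=
    measurableSet_lt measurable_const
      (measurable_measure_prodMk_right (measurableSet_le hXm.abs measurable_const))
  refine (le_mul_measure_iInter_of_antitone P hS hanti hM hlevel).trans
    (mul_le_mul' le_rfl (measure_mono_ae ?_))
  filter_upwards [hXB] with ω hω hmem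
  have hnear (n : ℕ) : ∃ t ∈ A, |X t ω| ≤ 1 / (n + 1) := by
    have hpos := mem_iInter.mp hmem n
    rw [mem_ofPred_eq, pos_iff_ne_zero, Measure.restrict_apply' hA.measurableSet] at hpos
    obtain ⟨t, ht, htA⟩ := nonempty_of_measure_ne_zero hpos
    exact ⟨t, htA, ht⟩
  obtain ⟨t, htA, ht⟩ := hA.exists_eq_zero_of_forall_abs_le (hXc ω).continuousOn hnear
  exact ⟨t, htA, (hω t (hA0 htA)).symm.trans ht⟩

theorem sq_mul_le_mul_measure_exists_eq_zero {A : Set ℝ} (hA : MeasurableSet A)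
    (hA0 : A ⊆ Ici 0) [SigmaFinite μ] (hmeas : ∀ t, Measurable (B t))
    (hcont : ∀ᵐ ω ∂P, ContinuousOn (fun t => B t ω) (Ici 0)) (hM : M ≠ ⊤)
    (hlow : ∀ ε, 0 < ε → ε ≤ 1 → ∀ t ∈ A, ENNReal.ofReal ε * a ≤ P {ω | |B t ω| ≤ ε})
    (hup : ∀ ε, 0 < ε → ε ≤ 1 →
      ∫⁻ t in A, ∫⁻ s in A, P ({ω | |B t ω| ≤ ε} ∩ {ω | |B s ω| ≤ ε}) ∂μ ∂μ ≤
        ENNReal.ofReal ε ^ 2 * M) :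
    (a * μ A) ^ 2 ≤ M * P {ω | ∃ t ∈ A, B t ω = 0} := by
  rw [hA.measure_eq_iSup_isCompact μ]
  simp only [ENNReal.mul_iSup, ENNReal.iSup_pow_of_ne_zero two_ne_zero, iSup_le_iff]
  intro K hKA hK
  refine (hK.sq_mul_le_mul_measure_exists_eq_zero P μ (hKA.trans hA0) hmeas hcont hM
    (fun ε hε hε1 t ht => hlow ε hε hε1 t (hKA ht)) fun ε hε hε1 => ?_).trans ?_
  · exact ((lintegral_mono fun t => lintegral_mono_set hKA).trans (lintegral_mono_set hKA)).trans
      (hup ε hε hε1)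
  · exact mul_le_mul' le_rfl (measure_mono fun ω ⟨t, ht, h0⟩ => ⟨t, hKA ht, h0⟩)

end Hitting

lemma mem_dyadicIcc_iff {n k : ℕ} {x : ℝ} :
    x ∈ dyadicIcc n k ↔ (k : ℝ) ≤ x * 2 ^ n ∧ x * 2 ^ n ≤ k + 1 := by
  simp [dyadicIcc, div_le_iff₀, le_div_iff₀]

section DyadicMass

variable {μ : Measure ℝ} {β c : ℝ}

lemma measure_eq_measure_inter_Icc (hsupp : μ (Icc (0 : ℝ) 1)ᶜ = 0) (s : Set ℝ) :
    μ s = μ (s ∩ Icc 0 1) := by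
  conv_lhs => rw [← Measure.restrict_eq_self_of_ae_mem (mem_ae_iff.mpr hsupp)]
  exact Measure.restrict_apply' measurableSet_Icc

variable (hsupp : μ (Icc (0 : ℝ) 1)ᶜ = 0)
  (hμ : ∀ n k : ℕ, k < 2 ^ n → μ (dyadicIcc n k) ≤ ENNReal.ofReal (c * (2 : ℝ) ^ (-β * (n : ℝ))))
include hsupp hμ

lemma measure_univ_le_of_dyadic : μ univ ≤ ENNReal.ofReal c := by
  rw [measure_eq_measure_inter_Icc hsupp, univ_inter]
  simpa [dyadicIcc] using hμ 0 0 one_pos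

-- Beyond the unit interval only the point `1` can carry mass.
lemma measure_dyadicIcc_le (n k : ℕ) :
    μ (dyadicIcc n k) ≤ ENNReal.ofReal (c * (2 : ℝ) ^ (-β * (n : ℝ))) := by
  rcases lt_or_ge k (2 ^ n) with hk | hk
  · exact hμ n k hk
  have hlast : 2 ^ n - 1 < 2 ^ n := Nat.sub_lt (Nat.two_pow_pos n) one_pos
  refine le_trans ?_ (hμ n _ hlast)
  rw [measure_eq_measure_inter_Icc hsupp]
  refine measure_mono fun x ⟨hx, hx01⟩ => ?_
  have h2n : (0 : ℝ) < 2 ^ n := by positivity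
  have hk' : (2 : ℝ) ^ n ≤ k := by exact_mod_cast hk
  rw [mem_dyadicIcc_iff] at hx ⊢
  push_cast [Nat.one_le_two_pow]
  constructor <;> nlinarith [hx01.2]

lemma measure_closedBall_le_three_mul (t : ℝ) (n : ℕ) :
    μ (Metric.closedBall t ((2 : ℝ) ^ n)⁻¹) ≤
      3 * ENNReal.ofReal (c * (2 : ℝ) ^ (-β * (n : ℝ))) := by
  set k := ⌊(t - ((2 : ℝ) ^ n)⁻¹) * 2 ^ n⌋₊
  have h2n : (0 : ℝ) < 2 ^ n := by positivity
  have hcover : Metric.closedBall t ((2 : ℝ) ^ n)⁻¹ ∩ Icc 0 1 ⊆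
      dyadicIcc n k ∪ dyadicIcc n (k + 1) ∪ dyadicIcc n (k + 2) := by
    rintro x ⟨hx, hx01⟩
    rw [Metric.mem_closedBall, Real.dist_eq, abs_le] at hx
    have hlow : (k : ℝ) ≤ x * 2 ^ n := by
      refine le_trans (Nat.cast_le.mpr (Nat.floor_le_floor ?_))
        (Nat.floor_le (by nlinarith [hx01.1]))
      nlinarith
    have hup : x * 2 ^ n < k + 3 := by
      have := Nat.lt_floor_add_one ((t - ((2 : ℝ) ^ n)⁻¹) * 2 ^ n)
      have h1 : ((2 : ℝ) ^ n)⁻¹ * 2 ^ n = 1 := inv_mul_cancel₀ h2n.ne'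
      nlinarith
    simp only [mem_union, mem_dyadicIcc_iff]
    push_cast
    by_cases h1 : x * 2 ^ n ≤ k + 1
    · exact Or.inl (Or.inl ⟨hlow, h1⟩)
    by_cases h2 : x * 2 ^ n ≤ k + 2
    · exact Or.inl (Or.inr ⟨by linarith, by linarith⟩)
    · exact Or.inr ⟨by linarith, by linarith⟩
  calc μ (Metric.closedBall t ((2 : ℝ) ^ n)⁻¹)
      = μ (Metric.closedBall t ((2 : ℝ) ^ n)⁻¹ ∩ Icc 0 1) := measure_eq_measure_inter_Icc hsupp _
    _ ≤ μ (dyadicIcc n k) + μ (dyadicIcc n (k + 1)) + μ (dyadicIcc n (k + 2)) :=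
        (measure_mono hcover).trans
          ((measure_union_le _ _).trans (add_le_add_left (measure_union_le _ _) _))
    _ ≤ _ := by
        have h := measure_dyadicIcc_le hsupp hμ n
        grw [h, h, h]
        ring_nf
        rfl

end DyadicMass

lemma inv_sqrt_dist_le_tsum_indicator {s t : ℝ} (hst : dist s t ≤ 1) :
    (ENNReal.ofReal √(dist s t))⁻¹ ≤
      ∑' n : ℕ, (Metric.closedBall t ((2 : ℝ) ^ n)⁻¹).indicator
        (fun _ => ENNReal.ofReal (√2 ^ (n + 1))) s := by
  have hterm (n : ℕ) : 1 ≤ ENNReal.ofReal (√2 ^ (n + 1)) :=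
    ENNReal.one_le_ofReal.mpr (one_le_pow₀ (Real.one_le_sqrt.mpr one_le_two))
  rcases (dist_nonneg : 0 ≤ dist s t).eq_or_lt with hd | hd
  · have hmem (n : ℕ) : s ∈ Metric.closedBall t ((2 : ℝ) ^ n)⁻¹ :=
      Metric.mem_closedBall.mpr (by rw [← hd]; positivity)
    calc _ ≤ ∑' _ : ℕ, (1 : ℝ≥0∞) := by
          rw [ENNReal.tsum_const_eq_top_of_ne_zero one_ne_zero]; exact le_top
      _ ≤ _ := ENNReal.tsum_le_tsum fun n => by rw [indicator_of_mem (hmem n)]; exact hterm n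
  obtain ⟨n, hn, hn'⟩ := exists_nat_pow_near (one_le_inv_iff₀.mpr ⟨hd, hst⟩) one_lt_two
  have hmem : s ∈ Metric.closedBall t ((2 : ℝ) ^ n)⁻¹ :=
    Metric.mem_closedBall.mpr ((le_inv_comm₀ hd (pow_pos two_pos n)).mpr hn)
  refine le_trans ?_ (ENNReal.le_tsum n)
  rw [indicator_of_mem hmem, ← ENNReal.ofReal_inv_of_pos (Real.sqrt_pos.mpr hd),
    ← Real.sqrt_inv]
  refine ENNReal.ofReal_le_ofReal (Real.sqrt_le_iff.mpr ⟨by positivity, hn'.le.trans_eq ?_⟩)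
  rw [← pow_mul, mul_comm, pow_mul, Real.sq_sqrt zero_le_two]

theorem exists_lintegral_inv_sqrt_dist_le {μ : Measure ℝ} {β c : ℝ} (hβ : 1 / 2 < β) (hc : 0 < c)
    (hsupp : μ (Icc (0 : ℝ) 1)ᶜ = 0)
    (hμ : ∀ n k : ℕ, k < 2 ^ n →
      μ (dyadicIcc n k) ≤ ENNReal.ofReal (c * (2 : ℝ) ^ (-β * (n : ℝ)))) :
    ∃ C > 0, ∀ t ∈ Icc (0 : ℝ) 1, ∫⁻ s, (ENNReal.ofReal √(dist t s))⁻¹ ∂μ ≤ ENNReal.ofReal C := by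
  have hr1 : √2 * (2 : ℝ) ^ (-β) < 1 := by
    rw [Real.sqrt_eq_rpow, ← Real.rpow_add two_pos]
    exact Real.rpow_lt_one_of_one_lt_of_neg one_lt_two (by linarith)
  set r := √2 * (2 : ℝ) ^ (-β)
  have hr0 : 0 ≤ r := by positivity
  have hind (t : ℝ) (n : ℕ) : Measurable ((Metric.closedBall t ((2 : ℝ) ^ n)⁻¹).indicator
      fun _ => ENNReal.ofReal (√2 ^ (n + 1))) :=
    measurable_const.indicator measurableSet_closedBall
  refine ⟨3 * √2 * c / (1 - r), by have := sub_pos.mpr hr1; positivity, fun t ht => ?_⟩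
  have hterm (n : ℕ) : ENNReal.ofReal (√2 ^ (n + 1)) * μ (Metric.closedBall t ((2 : ℝ) ^ n)⁻¹) ≤
      ENNReal.ofReal (3 * √2 * c * r ^ n) := by
    grw [measure_closedBall_le_three_mul hsupp hμ t n, ← ENNReal.ofReal_ofNat 3,
      ← ENNReal.ofReal_mul (by norm_num), ← ENNReal.ofReal_mul (by positivity)]
    refine le_of_eq (congrArg _ ?_)
    rw [Real.rpow_mul zero_le_two, Real.rpow_natCast]
    ring
  calc ∫⁻ s, (ENNReal.ofReal √(dist t s))⁻¹ ∂μ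
      = ∫⁻ s in Icc 0 1, (ENNReal.ofReal √(dist t s))⁻¹ ∂μ := by
        rw [Measure.restrict_eq_self_of_ae_mem (s := Icc 0 1) (mem_ae_iff.mpr hsupp)]
    _ ≤ ∫⁻ s in Icc 0 1, ∑' n : ℕ, (Metric.closedBall t ((2 : ℝ) ^ n)⁻¹).indicator
          (fun _ => ENNReal.ofReal (√2 ^ (n + 1))) s ∂μ := by
        refine setLIntegral_mono (Measurable.tsum (hind t)) fun s hs => ?_
        rw [dist_comm]
        refine inv_sqrt_dist_le_tsum_indicator ?_
        rw [Real.dist_eq, abs_sub_le_iff]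
        constructor <;> linarith [ht.1, ht.2, hs.1, hs.2]
    _ ≤ ∫⁻ s, ∑' n : ℕ, (Metric.closedBall t ((2 : ℝ) ^ n)⁻¹).indicator
          (fun _ => ENNReal.ofReal (√2 ^ (n + 1))) s ∂μ := setLIntegral_le_lintegral _ _
    _ = ∑' n : ℕ, ENNReal.ofReal (√2 ^ (n + 1)) * μ (Metric.closedBall t ((2 : ℝ) ^ n)⁻¹) := by
        rw [lintegral_tsum fun n => (hind t n).aemeasurable]
        simp_rw [lintegral_indicator_const measurableSet_closedBall]
    _ ≤ ∑' n : ℕ, ENNReal.ofReal (3 * √2 * c * r ^ n) := ENNReal.tsum_le_tsum hterm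
    _ = ENNReal.ofReal (3 * √2 * c / (1 - r)) := by
        rw [← ENNReal.ofReal_tsum_of_nonneg (fun n => by positivity)
          ((summable_geometric_of_lt_one hr0 hr1).mul_left _), tsum_mul_left,
          tsum_geometric_of_lt_one hr0 hr1, div_eq_mul_inv]

section Gaussian

open Real

lemma gaussianPDFReal_zero_le_inv_sqrt (v : ℝ≥0) (x : ℝ) : gaussianPDFReal 0 v x ≤ (√v)⁻¹ := by
  rw [gaussianPDFReal, Real.sqrt_mul (by positivity), mul_inv]
  have hπ : 1 ≤ √(2 * π) := Real.one_le_sqrt.mpr (by linarith [Real.pi_gt_three])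
  have hexp : rexp (-(x - 0) ^ 2 / (2 * v)) ≤ 1 := Real.exp_le_one_iff.mpr (by
    apply div_nonpos_of_nonpos_of_nonneg <;> [nlinarith [sq_nonneg x]; positivity])
  calc (√(2 * π))⁻¹ * (√v)⁻¹ * rexp (-(x - 0) ^ 2 / (2 * v)) ≤ 1 * (√v)⁻¹ * 1 := by
        gcongr
        exact inv_le_one_of_one_le₀ hπ
    _ = (√v)⁻¹ := by ring

lemma exp_neg_one_div_sqrt_le_gaussianPDFReal {v : ℝ≥0} (hv : 1 / 2 ≤ (v : ℝ)) (hv1 : (v : ℝ) ≤ 1)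
    {x : ℝ} (hx : |x| ≤ 1) : rexp (-1) / √(2 * π) ≤ gaussianPDFReal 0 v x := by
  rw [gaussianPDFReal, div_eq_inv_mul]
  have hx2 : (x - 0) ^ 2 ≤ 1 := by rw [sub_zero, ← sq_abs]; nlinarith [abs_nonneg x]
  have hv0 : (0 : ℝ) < v := by linarith
  have h1 : (√(2 * π))⁻¹ ≤ (√(2 * π * v))⁻¹ :=
    inv_anti₀ (by positivity) (Real.sqrt_le_sqrt (mul_le_of_le_one_right (by positivity) hv1))
  have h2 : rexp (-1) ≤ rexp (-(x - 0) ^ 2 / (2 * v)) := by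
    rw [Real.exp_le_exp, neg_div, neg_le_neg_iff, div_le_one (by positivity)]
    linarith
  exact mul_le_mul h1 h2 (Real.exp_nonneg _) (by positivity)

lemma gaussianReal_Icc_le {v : ℝ≥0} (hv : v ≠ 0) (r : ℝ) :
    gaussianReal 0 v (Icc (-r) r) ≤ ENNReal.ofReal (2 * r / √v) := by
  rw [gaussianReal_apply 0 hv]
  calc ∫⁻ x in Icc (-r) r, gaussianPDF 0 v x ≤ ∫⁻ _ in Icc (-r) r, ENNReal.ofReal (√v)⁻¹ :=
        lintegral_mono fun x => ENNReal.ofReal_le_ofReal (gaussianPDFReal_zero_le_inv_sqrt v x)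
    _ = ENNReal.ofReal (2 * r / √v) := by
        rw [setLIntegral_const, Real.volume_Icc, ← ENNReal.ofReal_mul (by positivity)]
        ring_nf

lemma le_gaussianReal_Icc {v : ℝ≥0} (hv : 1 / 2 ≤ (v : ℝ)) (hv1 : (v : ℝ) ≤ 1) {ε : ℝ}
    (hε1 : ε ≤ 1) :
    ENNReal.ofReal ε * ENNReal.ofReal (2 * (rexp (-1) / √(2 * π))) ≤
      gaussianReal 0 v (Icc (-ε) ε) := by
  have hv0 : v ≠ 0 := by rintro rfl; norm_num at hv
  rw [gaussianReal_apply 0 hv0]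
  calc ENNReal.ofReal ε * ENNReal.ofReal (2 * (rexp (-1) / √(2 * π)))
      = ∫⁻ _ in Icc (-ε) ε, ENNReal.ofReal (rexp (-1) / √(2 * π)) := by
        rw [setLIntegral_const, Real.volume_Icc, ← ENNReal.ofReal_mul' (by positivity),
          ← ENNReal.ofReal_mul (by positivity)]
        ring_nf
    _ ≤ ∫⁻ x in Icc (-ε) ε, gaussianPDF 0 v x :=
        setLIntegral_mono (measurable_gaussianPDF _ _) fun x hx =>
          ENNReal.ofReal_le_ofReal (exp_neg_one_div_sqrt_le_gaussianPDFReal hv hv1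
            (abs_le.mpr ⟨by linarith [hx.1], by linarith [hx.2]⟩))

end Gaussian

namespace IsStdBM

variable {Ω : Type} [MeasurableSpace Ω] {P : Measure Ω} {B : ℝ → Ω → ℝ} (hB : IsStdBM P B)
include hB

lemma measure_sub_preimage_Icc {s t : ℝ} (hs : 0 ≤ s) (hst : s < t) (r : ℝ) :
    P ((fun ω => B t ω - B s ω) ⁻¹' Icc (-r) r) = gaussianReal 0 (t - s).toNNReal (Icc (-r) r) := by
  have h := hB.gaussIncr s (t - s) hs (sub_pos.mpr hst)
  rw [add_sub_cancel] at h
  rw [← h]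
  exact (Measure.map_apply ((hB.meas t).sub (hB.meas s)) measurableSet_Icc).symm

lemma measure_abs_le {t : ℝ} (ht : 0 < t) (r : ℝ) :
    P {ω | |B t ω| ≤ r} = gaussianReal 0 t.toNNReal (Icc (-r) r) := by
  have h := hB.measure_sub_preimage_Icc le_rfl ht r
  rw [sub_zero] at h
  rw [← h]
  refine measure_congr ?_
  filter_upwards [hB.start] with ω h0
  change (|B t ω| ≤ r) = (B t ω - B 0 ω ∈ Icc (-r) r)
  rw [h0, sub_zero, mem_Icc, abs_le]

lemma indepFun_sub {r s t : ℝ} (hr : 0 ≤ r) (hrs : r ≤ s) (hst : s ≤ t) :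
    IndepFun (fun ω => B s ω - B r ω) (fun ω => B t ω - B s ω) P := by
  have hmono : Monotone ![r, s, t] := by
    refine Fin.monotone_iff_le_succ.mpr fun i => ?_
    fin_cases i <;> simpa
  have hnonneg (i : Fin 3) : 0 ≤ ![r, s, t] i := by
    fin_cases i <;> simp <;> linarith
  simpa using (hB.indepIncr 2 _ hmono hnonneg).indepFun (i := 0) (j := 1) (by decide)

lemma measure_inter_le {s t ε : ℝ} (hs : 0 < s) (hst : s < t) (hε : 0 ≤ ε) :
    P ({ω | |B s ω| ≤ ε} ∩ {ω | |B t ω| ≤ ε}) ≤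
      ENNReal.ofReal (8 * ε ^ 2 / (√s * √(t - s))) := by
  let f := fun ω => B s ω - B 0 ω
  let g := fun ω => B t ω - B s ω
  have hf : P (f ⁻¹' Icc (-ε) ε) ≤ ENNReal.ofReal (2 * ε / √s) := by
    rw [hB.measure_sub_preimage_Icc le_rfl hs, sub_zero]
    simpa [hs.le] using gaussianReal_Icc_le (v := s.toNNReal) (by simpa using hs) ε
  have hg : P (g ⁻¹' Icc (-(2 * ε)) (2 * ε)) ≤ ENNReal.ofReal (2 * (2 * ε) / √(t - s)) := by
    rw [hB.measure_sub_preimage_Icc hs.le hst]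
    simpa [hst.le] using gaussianReal_Icc_le (v := (t - s).toNNReal) (by simpa using hst) (2 * ε)
  calc P ({ω | |B s ω| ≤ ε} ∩ {ω | |B t ω| ≤ ε})
      ≤ P (f ⁻¹' Icc (-ε) ε ∩ g ⁻¹' Icc (-(2 * ε)) (2 * ε)) := by
        refine measure_mono_ae ?_
        filter_upwards [hB.start] with ω h0 hω
        obtain ⟨h1, h2⟩ : |B s ω| ≤ ε ∧ |B t ω| ≤ ε := hω
        refine ⟨by simpa [f, h0, abs_le] using h1, ?_⟩
        simp only [g, mem_preimage, mem_Icc, ← abs_le]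
        linarith [abs_sub (B t ω) (B s ω)]
    _ = P (f ⁻¹' Icc (-ε) ε) * P (g ⁻¹' Icc (-(2 * ε)) (2 * ε)) :=
        (hB.indepFun_sub le_rfl hs.le hst.le).measure_inter_preimage_eq_mul _ _
          measurableSet_Icc measurableSet_Icc
    _ ≤ ENNReal.ofReal (2 * ε / √s) * ENNReal.ofReal (2 * (2 * ε) / √(t - s)) := by gcongr
    _ = ENNReal.ofReal (8 * ε ^ 2 / (√s * √(t - s))) := by
        rw [← ENNReal.ofReal_mul (by positivity)]
        congr 1
        field_simp
        ring

open Real in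
lemma ofReal_mul_le_measure_abs_le {t ε : ℝ} (ht : t ∈ Icc (1 / 2) 1) (hε1 : ε ≤ 1) :
    ENNReal.ofReal ε * ENNReal.ofReal (2 * (rexp (-1) / √(2 * π))) ≤ P {ω | |B t ω| ≤ ε} := by
  have ht0 : 0 < t := by linarith [ht.1]
  rw [hB.measure_abs_le ht0]
  exact le_gaussianReal_Icc (by simpa [ht0.le] using ht.1) (by simpa [ht0.le] using ht.2) hε1

lemma measure_inter_le_inv_sqrt_dist {s t ε : ℝ} (hs : 1 / 2 ≤ s) (ht : 1 / 2 ≤ t) (hε : 0 < ε) :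
    P ({ω | |B t ω| ≤ ε} ∩ {ω | |B s ω| ≤ ε}) ≤
      ENNReal.ofReal (16 * ε ^ 2) * (ENNReal.ofReal √(dist t s))⁻¹ := by
  have hlt {s t : ℝ} (hs : 1 / 2 ≤ s) (hst : s < t) :
      P ({ω | |B s ω| ≤ ε} ∩ {ω | |B t ω| ≤ ε}) ≤
        ENNReal.ofReal (16 * ε ^ 2) * (ENNReal.ofReal √(t - s))⁻¹ := by
    have hd : 0 < √(t - s) := Real.sqrt_pos.mpr (sub_pos.mpr hst)
    have hs' : 1 / 2 ≤ √s := Real.le_sqrt_of_sq_le (by linarith)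
    refine (hB.measure_inter_le (by linarith) hst hε.le).trans ?_
    rw [← ENNReal.ofReal_inv_of_pos hd, ← ENNReal.ofReal_mul (by positivity)]
    refine ENNReal.ofReal_le_ofReal ?_
    rw [div_le_iff₀ (by positivity)]
    field_simp
    nlinarith [sq_nonneg ε]
  rcases lt_trichotomy s t with hst | rfl | hst
  · rw [inter_comm, Real.dist_eq, abs_of_pos (sub_pos.mpr hst)]
    exact hlt hs hst
  · rw [dist_self, Real.sqrt_zero, ENNReal.ofReal_zero, ENNReal.inv_zero,
      ENNReal.mul_top (by positivity)]
    exact le_top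
  · rw [dist_comm, Real.dist_eq, abs_of_pos (sub_pos.mpr hst)]
    exact hlt ht hst

lemma setLIntegral_setLIntegral_measure_inter_le {A : Set ℝ} (hAm : MeasurableSet A)
    (hA : A ⊆ Ici (1 / 2)) (μ : Measure ℝ) {C : ℝ}
    (hC : ∀ t ∈ A, ∫⁻ s, (ENNReal.ofReal √(dist t s))⁻¹ ∂μ ≤ ENNReal.ofReal C) {ε : ℝ}
    (hε : 0 < ε) :
    ∫⁻ t in A, ∫⁻ s in A, P ({ω | |B t ω| ≤ ε} ∩ {ω | |B s ω| ≤ ε}) ∂μ ∂μ ≤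
      ENNReal.ofReal ε ^ 2 * (ENNReal.ofReal (16 * C) * μ A) := by
  calc ∫⁻ t in A, ∫⁻ s in A, P ({ω | |B t ω| ≤ ε} ∩ {ω | |B s ω| ≤ ε}) ∂μ ∂μ
      ≤ ∫⁻ t in A, ∫⁻ s in A,
          ENNReal.ofReal (16 * ε ^ 2) * (ENNReal.ofReal √(dist t s))⁻¹ ∂μ ∂μ :=
        setLIntegral_mono' hAm fun t ht => setLIntegral_mono' hAm fun s hs =>
          hB.measure_inter_le_inv_sqrt_dist (hA hs) (hA ht) hε
    _ ≤ ∫⁻ _ in A, ENNReal.ofReal (16 * ε ^ 2) * ENNReal.ofReal C ∂μ := by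
        refine setLIntegral_mono' hAm fun t ht => ?_
        rw [lintegral_const_mul' _ _ ENNReal.ofReal_ne_top]
        gcongr
        exact (setLIntegral_le_lintegral _ _).trans (hC t ht)
    _ = _ := by
        rw [setLIntegral_const, ← mul_assoc]
        congr 1
        rw [← ENNReal.ofReal_pow hε.le, ← ENNReal.ofReal_mul (by positivity),
          ← ENNReal.ofReal_mul (by positivity)]
        ring_nf

end IsStdBM

/-- Second-moment hitting estimate: if `β > 1/2` and `μ` is a finite Borel
measure on `[0,1]` with `μ(I) ≤ c·|I|^β` for every dyadic interval `I`, then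
there is a constant `c' > 0` such that for every `A ⊆ [1/2, 1]` which is a
countable union of closed dyadic intervals,
`P(Z_B ∩ A ≠ ∅) ≥ c'·μ(A)²`. -/
theorem stmt_4 {Ω : Type} [MeasurableSpace Ω] (P : Measure Ω) (B : ℝ → Ω → ℝ)
    (hB : IsStdBM P B) (β c : ℝ) (hβ : 1 / 2 < β) (hc : 0 < c)
    (μ : Measure ℝ) [IsFiniteMeasure μ] (hsupp : μ (Icc (0 : ℝ) 1)ᶜ = 0)
    (hμ : ∀ n k : ℕ, k < 2 ^ n →
      μ (dyadicIcc n k) ≤ ENNReal.ofReal (c * (2 : ℝ) ^ (-β * (n : ℝ)))) :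
    ∃ c' > (0 : ℝ), ∀ A : Set ℝ, A ⊆ Icc (1 / 2 : ℝ) 1 →
      (∃ S : Set (ℕ × ℕ), S.Countable ∧ (∀ p ∈ S, p.2 < 2 ^ p.1) ∧
        A = ⋃ p ∈ S, dyadicIcc p.1 p.2) →
      ENNReal.ofReal c' * μ A ^ 2 ≤ P {ω | ∃ t ∈ A, B t ω = 0} := by
  have := hB.isProb
  obtain ⟨C, hC, henergy⟩ := exists_lintegral_inv_sqrt_dist_le hβ hc hsupp hμ
  set a := 2 * (Real.exp (-1) / √(2 * Real.pi))
  refine ⟨a ^ 2 / (16 * C * c), by positivity, fun A hA ⟨S, hS, _, hAS⟩ => ?_⟩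
  have hAm : MeasurableSet A := hAS ▸ MeasurableSet.biUnion hS fun p _ => measurableSet_Icc
  have hA0 : A ⊆ Ici (1 / 2) := hA.trans Icc_subset_Ici_self
  have hμA : μ A ≤ ENNReal.ofReal c :=
    (measure_mono (subset_univ A)).trans (measure_univ_le_of_dyadic hsupp hμ)
  have key := sq_mul_le_mul_measure_exists_eq_zero P μ hAm
    (hA0.trans (Ici_subset_Ici.mpr (by norm_num))) hB.meas hB.cont
    (M := ENNReal.ofReal (16 * C) * ENNReal.ofReal c) (by finiteness)
    (fun ε _ hε1 t ht => hB.ofReal_mul_le_measure_abs_le (hA ht) hε1)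
    fun ε hε _ => (hB.setLIntegral_setLIntegral_measure_inter_le hAm hA0 μ
      (fun t ht => henergy t (Icc_subset_Icc (by norm_num) le_rfl (hA ht))) hε).trans (by gcongr)
  rw [ENNReal.ofReal_div_of_pos (by positivity), ENNReal.ofReal_pow (by positivity),
    ENNReal.ofReal_mul (p := 16 * C) (by positivity), div_eq_mul_inv, mul_right_comm, ← mul_pow,
    ← div_eq_mul_inv]
  exact ENNReal.div_le_of_le_mul (by rwa [mul_comm (P _)])
end

section
/- Let B be a standard one-dimensional Brownian motion started at 0, regarded as a random element of C[0,1]. Almost surely the following holds: for every c < √2 and every h₀ > 0, there exist t ∈ [0,1] and h ∈ (0, h₀) with t + h ≤ 1 such that |B(t+h) − B(t)| > c·√(h·log(1/h)). -/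
/-!
Cut `[0,1]` into the `2ⁿ` dyadic intervals of length `h = 2⁻ⁿ`. The increments of `B` over them
are independent `N(0,h)`, and comparing the Gaussian mass of `(a, a + √h]` with the `N(0,h)` density
`φ_h` at `a + √h` gives `P(|N(0,h)| ≤ a) ≤ exp(-√h φ_h(a + √h))`. For `a = c √(h log(1/h))` and
`ℓ = log(1/h)`, all `2ⁿ` increments stay below `a` with probability at most
`exp(-(2π)^(-1/2) exp(ℓ - (c √ℓ + 1)² / 2))`, which tends to `0` precisely because `c² < 2`.
So almost surely some dyadic increment exceeds `a` at infinitely many levels `n`; letting `c`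
run through a sequence increasing to `√2` handles all `c < √2` at once.
-/

open MeasureTheory ProbabilityTheory Set

open Real Filter Topology
open scoped NNReal ENNReal

lemma ae_frequently_notMem_of_tendsto_measure_zero {α : Type*} [MeasurableSpace α]
    {μ : Measure α} {s : ℕ → Set α} (hs : Tendsto (fun n => μ (s n)) atTop (𝓝 0)) :
    ∀ᵐ x ∂μ, ∃ᶠ n in atTop, x ∉ s n := by
  have hnull : μ (⋃ N, ⋂ n ≥ N, s n) = 0 :=
    measure_iUnion_null fun N => le_antisymm (ge_of_tendsto hs
      (eventually_atTop.2 ⟨N, fun k hk => measure_mono (biInter_subset_of_mem hk)⟩)) zero_le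
  filter_upwards [measure_eq_zero_iff_ae_notMem.1 hnull] with x hx
  simpa [frequently_atTop] using hx

lemma gaussianPDFReal_antitoneOn (μ : ℝ) (v : ℝ≥0) :
    AntitoneOn (gaussianPDFReal μ v) (Ici μ) := by
  intro x hx y _ hxy
  simp only [gaussianPDFReal_def]
  gcongr
  exact sub_nonneg.2 hx

lemma ofReal_mul_gaussianPDFReal_le_gaussianReal_Ioc {μ : ℝ} {v : ℝ≥0} (hv : v ≠ 0) {a δ : ℝ}
    (ha : μ ≤ a) (hδ : 0 ≤ δ) :
    ENNReal.ofReal (δ * gaussianPDFReal μ v (a + δ)) ≤ gaussianReal μ v (Ioc a (a + δ)) := by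
  rw [gaussianReal_apply_eq_integral μ hv]
  refine ENNReal.ofReal_le_ofReal ?_
  have h := setIntegral_ge_of_const_le_real (μ := volume) (s := Ioc a (a + δ)) measurableSet_Ioc
    (by simp)
    (fun x hx => gaussianPDFReal_antitoneOn μ v (ha.trans hx.1.le) (by simp; linarith) hx.2)
    (integrable_gaussianPDFReal μ v).integrableOn
  simpa [mul_comm, hδ] using h

lemma measure_le_ofReal_exp_neg_of_disjoint {α : Type*} [MeasurableSpace α] {ν : Measure α}
    [IsProbabilityMeasure ν] {s t : Set α} (hst : Disjoint s t) (ht : MeasurableSet t) {r : ℝ}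
    (hr : 0 ≤ r) (hrt : ENNReal.ofReal r ≤ ν t) : ν s ≤ ENNReal.ofReal (exp (-r)) := by
  have hsum : ν s + ENNReal.ofReal r ≤ 1 :=
    calc ν s + ENNReal.ofReal r ≤ ν s + ν t := by gcongr
      _ = ν (s ∪ t) := (measure_union hst ht).symm
      _ ≤ 1 := prob_le_one
  calc ν s ≤ 1 - ENNReal.ofReal r := ENNReal.le_sub_of_add_le_right ENNReal.ofReal_ne_top hsum
    _ = ENNReal.ofReal (1 - r) := by rw [ENNReal.ofReal_sub _ hr, ENNReal.ofReal_one]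
    _ ≤ ENNReal.ofReal (exp (-r)) := ENNReal.ofReal_le_ofReal (one_sub_le_exp_neg r)

lemma gaussianReal_abs_le_le_ofReal_exp {v : ℝ≥0} (hv : v ≠ 0) {a δ : ℝ} (ha : 0 ≤ a)
    (hδ : 0 ≤ δ) :
    gaussianReal 0 v {x | |x| ≤ a} ≤ ENNReal.ofReal (exp (-(δ * gaussianPDFReal 0 v (a + δ)))) :=
  measure_le_ofReal_exp_neg_of_disjoint
    (disjoint_left.2 fun _ hx hx' => hx'.1.not_ge ((le_abs_self _).trans hx)) measurableSet_Ioc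
    (mul_nonneg hδ (gaussianPDFReal_nonneg _ _ _))
    (ofReal_mul_gaussianPDFReal_le_gaussianReal_Ioc hv ha hδ)

lemma inv_mul_sqrt_mul_gaussianPDFReal {h : ℝ} (hh : 0 < h) (c : ℝ) :
    h⁻¹ * (√h * gaussianPDFReal 0 h.toNNReal (c * √(h * log (1 / h)) + √h))
      = (√(2 * π))⁻¹ * exp (log (1 / h) - (c * √(log (1 / h)) + 1) ^ 2 / 2) := by
  have hexp : -(c * √(h * log (1 / h)) + √h - 0) ^ 2 / (2 * h)
      = -(c * √(log (1 / h)) + 1) ^ 2 / 2 := by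
    rw [sub_zero, sqrt_mul hh.le, show c * (√h * √(log (1 / h))) + √h
      = √h * (c * √(log (1 / h)) + 1) by ring, mul_pow, sq_sqrt hh.le]
    field_simp
  simp only [gaussianPDFReal_def, Real.coe_toNNReal _ hh.le]
  rw [hexp, sqrt_mul (by positivity), sub_eq_add_neg,
    exp_add, exp_log (by positivity), neg_div]
  field_simp

lemma tendsto_sub_sq_div_two_atTop {c : ℝ} (hc : c ^ 2 < 2) :
    Tendsto (fun L => L - (c * √L + 1) ^ 2 / 2) atTop atTop := by
  have hquad : Tendsto (fun s => s * ((1 - c ^ 2 / 2) * s - c) - 1 / 2) atTop atTop :=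
    tendsto_atTop_add_const_right _ _ (tendsto_id.atTop_mul_atTop₀
      (tendsto_atTop_add_const_right _ _ (tendsto_id.const_mul_atTop (by linarith))))
  refine (hquad.comp tendsto_sqrt_atTop).congr' ?_
  filter_upwards [eventually_ge_atTop 0] with L hL
  simp only [Function.comp_apply]
  linear_combination sq_sqrt hL

namespace IsStdBM

variable {Ω : Type} [MeasurableSpace Ω] {P : Measure Ω} {B : ℝ → Ω → ℝ}

theorem measure_iInter_increment_mem_eq_pow (hB : IsStdBM P B) (N : ℕ) {h : ℝ} (hh : 0 < h)
    {E : Set ℝ} (hE : MeasurableSet E) :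
    P (⋂ i : Fin N, {ω | B (i * h + h) ω - B (i * h) ω ∈ E})
      = gaussianReal 0 h.toNNReal E ^ N := by
  let t : Fin (N + 1) → ℝ := fun j => j * h
  have hindep := hB.indepIncr N t (fun j k hjk => by dsimp [t]; gcongr; exact_mod_cast hjk)
    (fun j => by positivity)
  have ht : ∀ i : Fin N, t i.succ = i * h + h ∧ t i.castSucc = i * h := fun i => by
    simp only [t, Fin.val_succ, Fin.val_castSucc, Nat.cast_add, Nat.cast_one, add_mul, one_mul,
      and_self]
  have hlaw : ∀ i : Fin N,
      P {ω | B (i * h + h) ω - B (i * h) ω ∈ E} = gaussianReal 0 h.toNNReal E := fun i => by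
    rw [← hB.gaussIncr (i * h) h (by positivity) hh,
      Measure.map_apply (by exact (hB.meas _).sub (hB.meas _)) hE]
    rfl
  have := hindep.measure_inter_preimage_eq_mul Finset.univ (sets := fun _ => E) fun _ _ => hE
  simp only [Finset.mem_univ, iInter_true, ht] at this
  exact (this.trans (Finset.prod_congr rfl fun i _ => hlaw i)).trans (by simp)

theorem measure_iInter_abs_increment_le_le (hB : IsStdBM P B) {N : ℕ} {h : ℝ} (hh : 0 < h)
    (hN : (N : ℝ) = h⁻¹) {c : ℝ} (hc : 0 ≤ c) :
    P (⋂ i : Fin N, {ω | |B (i * h + h) ω - B (i * h) ω| ≤ c * √(h * log (1 / h))})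
      ≤ ENNReal.ofReal
          (exp (-((√(2 * π))⁻¹ * exp (log (1 / h) - (c * √(log (1 / h)) + 1) ^ 2 / 2)))) := by
  have hv : h.toNNReal ≠ 0 := by simpa using hh
  refine (hB.measure_iInter_increment_mem_eq_pow N hh
    (E := {x | |x| ≤ c * √(h * log (1 / h))})
    (measurableSet_le measurable_abs measurable_const)).le.trans ?_
  calc _ ≤ ENNReal.ofReal (exp (-(√h * gaussianPDFReal 0 h.toNNReal
          (c * √(h * log (1 / h)) + √h)))) ^ N :=
        pow_le_pow_left₀ zero_le
          (gaussianReal_abs_le_le_ofReal_exp hv (by positivity) (sqrt_nonneg h)) N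
    _ = _ := by
        rw [← ENNReal.ofReal_pow (exp_nonneg _), ← exp_nat_mul, hN, mul_neg,
          inv_mul_sqrt_mul_gaussianPDFReal hh]

theorem ae_frequently_exists_dyadic_increment_gt (hB : IsStdBM P B) {c : ℝ} (hc0 : 0 ≤ c)
    (hc : c < √2) :
    ∀ᵐ ω ∂P, ∃ᶠ n in atTop, ∃ i : Fin (2 ^ n),
      c * √(((2:ℝ) ^ n)⁻¹ * log (1 / ((2:ℝ) ^ n)⁻¹))
        < |B (i * ((2:ℝ) ^ n)⁻¹ + ((2:ℝ) ^ n)⁻¹) ω - B (i * ((2:ℝ) ^ n)⁻¹) ω| := by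
  have hc2 : c ^ 2 < 2 := by simpa using (sq_lt_sq₀ hc0 (sqrt_nonneg 2)).2 hc
  have hlog : Tendsto (fun n : ℕ => log (1 / ((2:ℝ) ^ n)⁻¹)) atTop atTop := by
    simpa using tendsto_natCast_atTop_atTop.atTop_mul_const (log_pos one_lt_two)
  have hbound : Tendsto (fun n : ℕ => ENNReal.ofReal (exp (-((√(2 * π))⁻¹ *
      exp (log (1 / ((2:ℝ) ^ n)⁻¹) - (c * √(log (1 / ((2:ℝ) ^ n)⁻¹)) + 1) ^ 2 / 2)))))
      atTop (𝓝 0) := by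
    rw [← ENNReal.ofReal_zero]
    refine ENNReal.tendsto_ofReal (tendsto_exp_atBot.comp (tendsto_neg_atTop_atBot.comp
      (Tendsto.const_mul_atTop (by positivity) (tendsto_exp_atTop.comp
        ((tendsto_sub_sq_div_two_atTop hc2).comp hlog)))))
  filter_upwards [ae_frequently_notMem_of_tendsto_measure_zero
    (tendsto_of_tendsto_of_tendsto_of_le_of_le tendsto_const_nhds hbound (fun _ => zero_le)
      fun n => hB.measure_iInter_abs_increment_le_le (N := 2 ^ n) (by positivity)
        (by push_cast; rw [inv_inv]) hc0)] with ω hω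
  simpa using hω

theorem ae_exists_increment_gt (hB : IsStdBM P B) {c : ℝ} (hc0 : 0 ≤ c) (hc : c < √2) :
    ∀ᵐ ω ∂P, ∀ h₀ : ℝ, 0 < h₀ → ∃ t : ℝ, 0 ≤ t ∧ t ≤ 1 ∧ ∃ h : ℝ, 0 < h ∧ h < h₀ ∧ t + h ≤ 1 ∧
      c * √(h * log (1 / h)) < |B (t + h) ω - B t ω| := by
  filter_upwards [hB.ae_frequently_exists_dyadic_increment_gt hc0 hc] with ω hω h₀ hh₀
  obtain ⟨N, hN⟩ := exists_pow_lt_of_lt_one hh₀ (by norm_num : (1:ℝ) / 2 < 1)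
  obtain ⟨n, hNn, i, hi⟩ := hω.forall_exists_of_atTop N
  have hmesh : 0 < ((2:ℝ) ^ n)⁻¹ := by positivity
  have hend : (i : ℝ) * ((2:ℝ) ^ n)⁻¹ + ((2:ℝ) ^ n)⁻¹ ≤ 1 := by
    rw [← add_one_mul, ← div_eq_mul_inv, div_le_one (by positivity)]
    exact_mod_cast i.isLt
  refine ⟨i * ((2:ℝ) ^ n)⁻¹, by positivity, by linarith, ((2:ℝ) ^ n)⁻¹, hmesh, ?_, hend, hi⟩
  calc ((2:ℝ) ^ n)⁻¹ = (1 / 2) ^ n := by rw [one_div_pow, one_div]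
    _ ≤ (1 / 2) ^ N := pow_le_pow_of_le_one (by norm_num) (by norm_num) hNn
    _ < h₀ := hN

end IsStdBM

/-- Lower modulus of continuity: almost surely, for every `c < √2` and every
`h₀ > 0` there are `t ∈ [0,1]` and `h ∈ (0, h₀)` with `t + h ≤ 1` such that
`|B(t+h) − B(t)| > c·√(h·log(1/h))`. -/
theorem stmt_5 {Ω : Type} [MeasurableSpace Ω] (P : Measure Ω) (B : ℝ → Ω → ℝ)
    (hB : IsStdBM P B) :
    ∀ᵐ ω ∂P, ∀ c : ℝ, c < Real.sqrt 2 → ∀ h₀ : ℝ, 0 < h₀ →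
      ∃ t : ℝ, 0 ≤ t ∧ t ≤ 1 ∧ ∃ h : ℝ, 0 < h ∧ h < h₀ ∧ t + h ≤ 1 ∧
        |B (t + h) ω - B t ω| > c * Real.sqrt (h * Real.log (1 / h)) := by
  have hcm0 : ∀ m : ℕ, 0 ≤ √2 - 1 / (m + 1) := fun m => by
    have : 1 / ((m : ℝ) + 1) ≤ 1 := div_le_one_of_le₀ (by simp) (by positivity)
    linarith [one_lt_sqrt_two]
  filter_upwards [ae_all_iff.2 fun m : ℕ =>
    hB.ae_exists_increment_gt (hcm0 m) (sub_lt_self _ Nat.one_div_pos_of_nat)]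
    with ω hω c hc h₀ hh₀
  obtain ⟨m, hm⟩ := exists_nat_one_div_lt (sub_pos.2 hc)
  obtain ⟨t, ht0, ht1, h, hh, hhh₀, hth, hgt⟩ := hω m h₀ hh₀
  refine ⟨t, ht0, ht1, h, hh, hhh₀, hth, lt_of_le_of_lt ?_ hgt⟩
  gcongr
  linarith
end

section
/- Let B be a standard one-dimensional Brownian motion started at 0, regarded as a random element of C[0,1]. For every c > √2, almost surely there exists h₀ > 0 such that for all h ∈ (0, h₀) and all t ∈ [0, 1−h], |B(t+h) − B(t)| < c·√(h·log(1/h)). -/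
open MeasureTheory ProbabilityTheory Set

open Filter Topology Real

/-!
Lévy's dyadic chaining. Choose `√2 < c₁ < c` and a large constant `K`. Almost surely, by
Borel–Cantelli, for every large level `n`:
* each dyadic step of every level `j ≥ n` is below `2 √(j 2⁻ʲ)`: a Gaussian tail bound gives
  probability at most `2ʲ · 2 e^{-2j}`;
* each increment over `l ≤ 2K` consecutive intervals of level `n` is below `c₁ ψ(l 2⁻ⁿ)`, where
  `ψ(s) = √(s log (1/s))`: the probability is at most `2ⁿ · 2K · 2 (2K 2⁻ⁿ)^{c₁²/2}`, which is
  summable because `c₁²/2 > 1`.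
Given `h`, pick `n` with `K ≤ h 2ⁿ ≤ 2K`. Approximating `t` from above and `t + h` from below
by dyadic points of level `n`, and then by ever finer dyadic points, the increment over `[t, t + h]`
is at most `c₁ ψ(h)` plus a geometric sum `12 √(n 2⁻ⁿ)`, and the latter is `≤ (c - c₁) ψ(h)` once
`K ≥ 288 / (c - c₁)²`.
-/

theorem ae_eventually_notMem_of_measureReal_le {α : Type*} [MeasurableSpace α] {μ : Measure α}
    [IsFiniteMeasure μ] {s : ℕ → Set α} {g : ℕ → ℝ} (hg : Summable g)
    (hs : ∀ᶠ n in atTop, μ.real (s n) ≤ g n) :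
    ∀ᵐ x ∂μ, ∀ᶠ n in atTop, x ∉ s n := by
  have hsum : Summable fun n ↦ μ.real (s n) :=
    hg.of_norm_bounded_eventually_nat <| hs.mono fun n hn ↦ by
      rwa [norm_of_nonneg measureReal_nonneg]
  have htsum : ∑' n, μ (s n) = ENNReal.ofReal (∑' n, μ.real (s n)) := by
    rw [ENNReal.ofReal_tsum_of_nonneg (fun _ ↦ measureReal_nonneg) hsum]
    exact tsum_congr fun n ↦ (ofReal_measureReal).symm
  exact ae_eventually_notMem (htsum ▸ ENNReal.ofReal_ne_top)

theorem ProbabilityTheory.HasSubgaussianMGF.of_map_eq_gaussianReal {Ω : Type*}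
    [MeasurableSpace Ω] {P : Measure Ω} {X : Ω → ℝ} {v : NNReal}
    (hX : P.map X = gaussianReal 0 v) : HasSubgaussianMGF X v P := by
  have hXm : AEMeasurable X P := aemeasurable_of_map_neZero (by rw [hX]; infer_instance)
  rw [← HasSubgaussianMGF.id_map_iff hXm, hX]
  exact ⟨integrable_exp_mul_gaussianReal, fun t ↦ by simp [mgf_id_gaussianReal]⟩

theorem measureReal_abs_ge_le_of_map_eq_gaussianReal {Ω : Type*} [MeasurableSpace Ω]
    {P : Measure Ω} [IsFiniteMeasure P] {X : Ω → ℝ} {v : NNReal}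
    (hX : P.map X = gaussianReal 0 v) {a : ℝ} (ha : 0 ≤ a) :
    P.real {ω | a ≤ |X ω|} ≤ 2 * exp (-a ^ 2 / (2 * v)) := by
  have hsub := HasSubgaussianMGF.of_map_eq_gaussianReal hX
  calc P.real {ω | a ≤ |X ω|} ≤ P.real ({ω | a ≤ X ω} ∪ {ω | a ≤ (-X) ω}) := by
        refine measureReal_mono fun ω hω ↦ ?_
        simpa [le_abs', or_comm, le_neg] using hω
    _ ≤ P.real {ω | a ≤ X ω} + P.real {ω | a ≤ (-X) ω} := measureReal_union_le _ _
    _ ≤ 2 * exp (-a ^ 2 / (2 * v)) := by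
        linarith [hsub.measure_ge_le ha, hsub.neg.measure_ge_le ha]

noncomputable def dyadicScale (j : ℕ) : ℝ := √(j / 2 ^ j)

def DyadicStepsLt (f : ℝ → ℝ) (j : ℕ) : Prop :=
  ∀ k : ℕ, k < 2 ^ j → |f ((k + 1) / 2 ^ j) - f (k / 2 ^ j)| < 2 * dyadicScale j

theorem dyadicScale_succ_le {j : ℕ} (hj : 8 ≤ j) :
    dyadicScale (j + 1) ≤ 3 / 4 * dyadicScale j := by
  have hj' : (8 : ℝ) ≤ j := by exact_mod_cast hj
  rw [dyadicScale, dyadicScale, show (3 / 4 : ℝ) = √(9 / 16) by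
      rw [show (9 / 16 : ℝ) = (3 / 4) ^ 2 by norm_num, sqrt_sq (by norm_num)],
    ← sqrt_mul (by norm_num)]
  gcongr
  rw [pow_succ, Nat.cast_succ, div_le_iff₀ (by positivity)]
  field_simp
  linarith

theorem dyadicScale_add_le {n : ℕ} (hn : 8 ≤ n) (m : ℕ) :
    dyadicScale (n + m) ≤ (3 / 4) ^ m * dyadicScale n := by
  induction m with
  | zero => simp
  | succ m ih =>
    calc dyadicScale (n + m + 1) ≤ 3 / 4 * dyadicScale (n + m) := dyadicScale_succ_le (by omega)
      _ ≤ 3 / 4 * ((3 / 4) ^ m * dyadicScale n) := by gcongr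
      _ = (3 / 4) ^ (m + 1) * dyadicScale n := by ring

theorem abs_sub_le_of_tendsto_of_steps {f : ℝ → ℝ} {y : ℕ → ℝ} {x : ℝ} {n : ℕ} (hn : 8 ≤ n)
    (hlim : Tendsto (fun j ↦ f (y j)) atTop (𝓝 (f x)))
    (hstep : ∀ j, n ≤ j → |f (y j) - f (y (j + 1))| ≤ 2 * dyadicScale (j + 1)) :
    |f (y n) - f x| ≤ 6 * dyadicScale n := by
  have hbound : ∀ m, 2 * dyadicScale (n + m + 1) ≤ 2 * dyadicScale n * (3 / 4) ^ (m + 1) :=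
    fun m ↦ by linarith [(add_assoc n m 1).symm ▸ dyadicScale_add_le hn (m + 1)]
  have hgeom : Summable fun m : ℕ ↦ 2 * dyadicScale n * (3 / 4 : ℝ) ^ (m + 1) :=
    ((summable_geometric_of_lt_one (by norm_num) (by norm_num)).comp_injective
      (add_left_injective 1)).mul_left _
  have hsum : Summable fun m ↦ 2 * dyadicScale (n + m + 1) :=
    hgeom.of_nonneg_of_le (fun _ ↦ by unfold dyadicScale; positivity) hbound
  have hchain := dist_le_tsum_of_dist_le_of_tendsto₀ (f := fun m ↦ f (y (n + m))) _
    (fun m ↦ by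
      simpa only [dist_eq, Nat.succ_eq_add_one, ← add_assoc] using hstep (n + m) (by omega))
    hsum (((tendsto_add_atTop_iff_nat n).2 hlim).congr fun m ↦ by rw [add_comm])
  calc |f (y n) - f x| ≤ ∑' m, 2 * dyadicScale (n + m + 1) := by simpa [dist_eq] using hchain
    _ ≤ ∑' m : ℕ, 2 * dyadicScale n * (3 / 4 : ℝ) ^ (m + 1) := hsum.tsum_le_tsum hbound hgeom
    _ = 6 * dyadicScale n := by
      simp only [pow_succ, tsum_mul_left, tsum_mul_right,
        tsum_geometric_of_lt_one (by norm_num : (0 : ℝ) ≤ 3 / 4) (by norm_num)]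
      norm_num; ring

theorem DyadicStepsLt.abs_sub_le {f : ℝ → ℝ} {j : ℕ} (h : DyadicStepsLt f j) {p q : ℕ}
    (hpq : p ≤ q) (hqp : q ≤ p + 1) (hq : q ≤ 2 ^ j) :
    |f (q / 2 ^ j) - f (p / 2 ^ j)| ≤ 2 * dyadicScale j := by
  obtain rfl | rfl : q = p ∨ q = p + 1 := by omega
  · simp only [sub_self, abs_zero]; unfold dyadicScale; positivity
  · exact_mod_cast (h p (by omega)).le

theorem floor_mul_two_pow_succ (x : ℝ) (j : ℕ) :
    ⌊x * 2 ^ (j + 1)⌋₊ = 2 * ⌊x * 2 ^ j⌋₊ ∨ ⌊x * 2 ^ (j + 1)⌋₊ = 2 * ⌊x * 2 ^ j⌋₊ + 1 := by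
  have : ⌊x * 2 ^ j⌋₊ = ⌊x * 2 ^ (j + 1)⌋₊ / 2 := by
    rw [← Nat.floor_div_natCast]; congr 1; push_cast; ring
  omega

theorem tendsto_floor_mul_two_pow_div {x : ℝ} (hx : 0 ≤ x) :
    Tendsto (fun j : ℕ ↦ (⌊x * 2 ^ j⌋₊ : ℝ) / 2 ^ j) atTop (𝓝 x) :=
  (tendsto_nat_floor_mul_div_atTop hx).comp (tendsto_pow_atTop_atTop_of_one_lt one_lt_two)

theorem abs_floor_div_two_pow_sub_le {f : ℝ → ℝ} {x : ℝ} {n : ℕ}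
    (hf : ContinuousWithinAt f (Ici 0) x) (hx0 : 0 ≤ x) (hx1 : x ≤ 1) (hn : 8 ≤ n)
    (hsteps : ∀ j, n < j → DyadicStepsLt f j) :
    |f (⌊x * 2 ^ n⌋₊ / 2 ^ n) - f x| ≤ 6 * dyadicScale n := by
  refine abs_sub_le_of_tendsto_of_steps hn (hf.tendsto.comp <| tendsto_nhdsWithin_iff.2
    ⟨tendsto_floor_mul_two_pow_div hx0, .of_forall fun j ↦ by simp only [mem_Ici]; positivity⟩)
    fun j hj ↦ ?_
  have hb : (⌊x * 2 ^ (j + 1)⌋₊ : ℝ) ≤ 2 ^ (j + 1) :=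
    (Nat.floor_le (by positivity)).trans (mul_le_of_le_one_left (by positivity) hx1)
  have hy : (⌊x * 2 ^ j⌋₊ : ℝ) / 2 ^ j = ((2 * ⌊x * 2 ^ j⌋₊ : ℕ) : ℝ) / 2 ^ (j + 1) := by
    push_cast; field_simp; ring
  rw [hy, abs_sub_comm]
  refine (hsteps (j + 1) (by omega)).abs_sub_le ?_ ?_ (by exact_mod_cast hb) <;>
    rcases floor_mul_two_pow_succ x j with h | h <;> omega

theorem abs_floor_add_one_div_two_pow_sub_le {f : ℝ → ℝ} {x : ℝ} {n : ℕ}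
    (hf : ContinuousWithinAt f (Ici 0) x) (hx0 : 0 ≤ x) (hx1 : x < 1) (hn : 8 ≤ n)
    (hsteps : ∀ j, n < j → DyadicStepsLt f j) :
    |f ((⌊x * 2 ^ n⌋₊ + 1) / 2 ^ n) - f x| ≤ 6 * dyadicScale n := by
  have hlim : Tendsto (fun j : ℕ ↦ ((⌊x * 2 ^ j⌋₊ : ℝ) + 1) / 2 ^ j) atTop (𝓝 x) := by
    simpa only [add_div, one_div, add_zero, Function.comp_def] using
      (tendsto_floor_mul_two_pow_div hx0).add
        (tendsto_inv_atTop_zero.comp (tendsto_pow_atTop_atTop_of_one_lt one_lt_two))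
  refine abs_sub_le_of_tendsto_of_steps hn (hf.tendsto.comp <| tendsto_nhdsWithin_iff.2
    ⟨hlim, .of_forall fun j ↦ by simp only [mem_Ici]; positivity⟩) fun j hj ↦ ?_
  have ha : ⌊x * 2 ^ j⌋₊ < 2 ^ j := by
    rw [Nat.floor_lt (by positivity)]; push_cast
    exact mul_lt_of_lt_one_left (by positivity) hx1
  have hy : ((⌊x * 2 ^ j⌋₊ : ℝ) + 1) / 2 ^ j =
      ((2 * ⌊x * 2 ^ j⌋₊ + 2 : ℕ) : ℝ) / 2 ^ (j + 1) := by
    push_cast; field_simp; ring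
  have hy' : ((⌊x * 2 ^ (j + 1)⌋₊ : ℝ) + 1) / 2 ^ (j + 1) =
      ((⌊x * 2 ^ (j + 1)⌋₊ + 1 : ℕ) : ℝ) / 2 ^ (j + 1) := by push_cast; rfl
  rw [hy, hy']
  refine (hsteps (j + 1) (by omega)).abs_sub_le ?_ ?_ (by rw [pow_succ]; omega) <;>
    rcases floor_mul_two_pow_succ x j with h | h <;> omega

noncomputable def levyModulus (h : ℝ) : ℝ := √(h * log (1 / h))

theorem mul_log_one_div_le_mul_log_one_div {s h : ℝ} (hs : 0 < s) (hsh : s ≤ h)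
    (hh : h ≤ exp (-1)) : s * log (1 / s) ≤ h * log (1 / h) := by
  have hh0 : 0 < h := hs.trans_le hsh
  have hlog : 1 ≤ log (1 / h) := by
    rw [one_div, log_inv]; linarith [(log_le_iff_le_exp hh0).2 hh]
  have hsplit : log (1 / s) = log (1 / h) + log (h / s) := by
    rw [← log_mul (by positivity) (by positivity)]; congr 1; field_simp
  have hratio : s * log (h / s) ≤ h - s := by
    have := mul_le_mul_of_nonneg_left (log_le_sub_one_of_pos (div_pos hh0 hs)) hs.le
    rwa [mul_sub, mul_div_cancel₀ _ hs.ne', mul_one] at this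
  rw [hsplit]
  nlinarith

theorem levyModulus_le_levyModulus {s h : ℝ} (hs : 0 < s) (hsh : s ≤ h) (hh : h ≤ exp (-1)) :
    levyModulus s ≤ levyModulus h :=
  sqrt_le_sqrt (mul_log_one_div_le_mul_log_one_div hs hsh hh)

def CoarseIncrementsLt (f : ℝ → ℝ) (c : ℝ) (L n : ℕ) : Prop :=
  ∀ k : ℕ, k < 2 ^ n → ∀ l ∈ Finset.Icc 1 L,
    |f ((k + l) / 2 ^ n) - f (k / 2 ^ n)| < c * levyModulus (l / 2 ^ n)

theorem abs_sub_lt_of_dyadicStepsLt_of_coarseIncrementsLt {f : ℝ → ℝ}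
    (hf : ContinuousOn f (Ici 0)) {c : ℝ} (hc : 0 ≤ c) {L n : ℕ} (hn : 8 ≤ n)
    (hfine : ∀ j, n < j → DyadicStepsLt f j) (hcoarse : CoarseIncrementsLt f c L n) {h t : ℝ}
    (hh2 : 2 ≤ h * 2 ^ n) (hhL : h * 2 ^ n ≤ L) (hhe : h ≤ exp (-1)) (ht0 : 0 ≤ t)
    (ht1 : t ≤ 1 - h) :
    |f (t + h) - f t| < c * levyModulus h + 12 * dyadicScale n := by
  have h2n : (0 : ℝ) < 2 ^ n := by positivity
  have hh0 : 0 < h := by nlinarith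
  set a := ⌊t * 2 ^ n⌋₊ + 1
  set b := ⌊(t + h) * 2 ^ n⌋₊
  have ha : t * 2 ^ n < a := by push_cast [a]; exact Nat.lt_floor_add_one _
  have ha' : (a : ℝ) ≤ t * 2 ^ n + 1 := by
    push_cast [a]; linarith [Nat.floor_le (by positivity : 0 ≤ t * 2 ^ n)]
  have hb : (b : ℝ) ≤ (t + h) * 2 ^ n := Nat.floor_le (by positivity)
  have hb' : (t + h) * 2 ^ n - 1 < b := Nat.sub_one_lt_floor _
  have hab : a < b := by exact_mod_cast (show (a : ℝ) < b by nlinarith)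
  have hl : ((b - a : ℕ) : ℝ) = b - a := Nat.cast_sub hab.le
  have hbL : ((b - a : ℕ) : ℝ) ≤ L := by rw [hl]; nlinarith
  have hcoarse' := hcoarse a (by exact_mod_cast (show (a : ℝ) < 2 ^ n by nlinarith)) (b - a)
    (Finset.mem_Icc.2 ⟨by omega, by exact_mod_cast hbL⟩)
  rw [hl, add_sub_cancel] at hcoarse'
  have hmod : levyModulus ((b - a) / 2 ^ n) ≤ levyModulus h :=
    levyModulus_le_levyModulus (div_pos (sub_pos.2 (by exact_mod_cast hab)) h2n)
      (by rw [div_le_iff₀ h2n]; nlinarith) hhe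
  have hleft : |f (a / 2 ^ n) - f t| ≤ 6 * dyadicScale n := by
    simpa [a] using abs_floor_add_one_div_two_pow_sub_le (hf.continuousWithinAt ht0) ht0
      (by linarith) hn hfine
  have hright : |f (t + h) - f (b / 2 ^ n)| ≤ 6 * dyadicScale n := by
    rw [abs_sub_comm]
    exact abs_floor_div_two_pow_sub_le (hf.continuousWithinAt (by simp only [mem_Ici]; linarith))
      (by linarith) (by linarith) hn hfine
  have hmain := hcoarse'.trans_le (mul_le_mul_of_nonneg_left hmod hc)
  linarith [abs_sub_le (f (t + h)) (f (b / 2 ^ n)) (f t),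
    abs_sub_le (f (b / 2 ^ n)) (f (a / 2 ^ n)) (f t)]

theorem eventually_dyadicScale_le_levyModulus {δ K : ℝ} (hδ : 0 < δ) (hK : 288 / δ ^ 2 ≤ K) :
    ∀ᶠ n : ℕ in atTop, ∀ h : ℝ, K ≤ h * 2 ^ n → h * 2 ^ n ≤ 2 * K →
      h ≤ exp (-1) ∧ 12 * dyadicScale n ≤ δ * levyModulus h := by
  have hK0 : 0 < K := lt_of_lt_of_le (by positivity) hK
  have hsmall : ∀ᶠ n : ℕ in atTop, 2 * K / 2 ^ n ≤ exp (-1) :=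
    (tendsto_const_nhds.div_atTop
      (tendsto_pow_atTop_atTop_of_one_lt one_lt_two)).eventually_le_const (exp_pos _)
  have hlog : ∀ᶠ n : ℕ in atTop, log K ≤ n * (log 2 - 1 / 2) :=
    (tendsto_natCast_atTop_atTop.atTop_mul_const
      (by linarith [log_two_gt_d9])).eventually_ge_atTop _
  filter_upwards [hsmall, hlog] with n hn1 hn2 h hKh hhK
  have h2n : (0 : ℝ) < 2 ^ n := by positivity
  have hhe : h ≤ exp (-1) := ((le_div_iff₀ h2n).2 hhK).trans hn1
  refine ⟨hhe, ?_⟩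
  have hK' : K / 2 ^ n ≤ h := (div_le_iff₀ h2n).2 hKh
  have hlogK : n / 2 ≤ log (1 / (K / 2 ^ n)) := by
    rw [one_div_div, log_div h2n.ne' hK0.ne', log_pow]; linarith
  have key : 144 * (n / 2 ^ n) ≤ δ ^ 2 * (h * log (1 / h)) :=
    calc 144 * (n / 2 ^ n) = δ ^ 2 * (288 / δ ^ 2 / 2 ^ n * (n / 2)) := by field_simp; ring
      _ ≤ δ ^ 2 * (K / 2 ^ n * log (1 / (K / 2 ^ n))) := by gcongr
      _ ≤ δ ^ 2 * (h * log (1 / h)) :=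
        mul_le_mul_of_nonneg_left (mul_log_one_div_le_mul_log_one_div (by positivity) hK' hhe)
          (sq_nonneg δ)
  calc 12 * dyadicScale n = √(144 * (n / 2 ^ n)) := by
        rw [dyadicScale, sqrt_mul (by norm_num), show (144 : ℝ) = 12 ^ 2 by norm_num,
          sqrt_sq (by norm_num)]
    _ ≤ √(δ ^ 2 * (h * log (1 / h))) := sqrt_le_sqrt key
    _ = δ * levyModulus h := by rw [sqrt_mul (sq_nonneg _), sqrt_sq hδ.le, levyModulus]

theorem exists_dyadic_level {K h : ℝ} (hh : 0 < h) {N : ℕ} (hhN : h < K / 2 ^ N) :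
    ∃ n, N ≤ n ∧ K ≤ h * 2 ^ n ∧ h * 2 ^ n ≤ 2 * K := by
  have hNK : 2 ^ N * h < K := by rwa [lt_div_iff₀ (by positivity), mul_comm] at hhN
  obtain ⟨m, hm1, hm2⟩ := exists_nat_pow_near (x := K / h) (y := (2 : ℝ))
    (by rw [one_le_div hh]; nlinarith [one_le_pow₀ (M₀ := ℝ) one_le_two (n := N)]) one_lt_two
  rw [le_div_iff₀ hh] at hm1
  rw [div_lt_iff₀ hh] at hm2
  refine ⟨m + 1, ?_, by linarith, by rw [pow_succ]; linarith⟩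
  have : (2 : ℝ) ^ N < 2 ^ (m + 1) := lt_of_mul_lt_mul_right (hNK.trans hm2) hh.le
  exact ((pow_lt_pow_iff_right₀ one_lt_two).1 this).le

section BrownianMotion

variable {Ω : Type} [MeasurableSpace Ω] {P : Measure Ω} {B : ℝ → Ω → ℝ}

theorem IsStdBM.measureReal_abs_sub_ge_le (hB : IsStdBM P B) {t s a : ℝ} (ht : 0 ≤ t)
    (hs : 0 < s) (ha : 0 ≤ a) :
    P.real {ω | a ≤ |B (t + s) ω - B t ω|} ≤ 2 * exp (-a ^ 2 / (2 * s)) := by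
  have := hB.isProb
  simpa [coe_toNNReal s hs.le] using
    measureReal_abs_ge_le_of_map_eq_gaussianReal (hB.gaussIncr t s ht hs) ha

theorem IsStdBM.measureReal_not_dyadicStepsLt_le (hB : IsStdBM P B) (j : ℕ) :
    P.real {ω | ¬DyadicStepsLt (fun t ↦ B t ω) j} ≤ 2 * (2 * exp (-2)) ^ j := by
  have := hB.isProb
  have hterm : ∀ k : ℕ, P.real {ω | 2 * dyadicScale j ≤
      |B (k / 2 ^ j + 1 / 2 ^ j) ω - B (k / 2 ^ j) ω|} ≤ 2 * exp (-2 * j) := fun k ↦ by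
    refine (hB.measureReal_abs_sub_ge_le (by positivity) (by positivity)
      (by unfold dyadicScale; positivity)).trans_eq ?_
    rw [dyadicScale, mul_pow, sq_sqrt (by positivity)]
    field_simp
  calc P.real {ω | ¬DyadicStepsLt (fun t ↦ B t ω) j}
      ≤ P.real (⋃ k ∈ Finset.range (2 ^ j), {ω | 2 * dyadicScale j ≤
          |B (k / 2 ^ j + 1 / 2 ^ j) ω - B (k / 2 ^ j) ω|}) :=
        measureReal_mono (fun ω hω ↦ by simpa [DyadicStepsLt, add_div] using hω)
          (measure_ne_top _ _)
    _ ≤ ∑ k ∈ Finset.range (2 ^ j), 2 * exp (-2 * j) :=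
        (measureReal_biUnion_finset_le _ _).trans (Finset.sum_le_sum fun k _ ↦ hterm k)
    _ = 2 * (2 * exp (-2)) ^ j := by
        rw [Finset.sum_const, Finset.card_range, nsmul_eq_mul, mul_pow, ← exp_nat_mul]
        push_cast; ring_nf

theorem IsStdBM.measureReal_abs_sub_ge_levyModulus_le (hB : IsStdBM P B) {c t s : ℝ}
    (hc : 0 ≤ c) (ht : 0 ≤ t) (hs0 : 0 < s) (hs1 : s ≤ 1) :
    P.real {ω | c * levyModulus s ≤ |B (t + s) ω - B t ω|} ≤ 2 * s ^ (c ^ 2 / 2) := by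
  refine (hB.measureReal_abs_sub_ge_le ht hs0 (by unfold levyModulus; positivity)).trans_eq ?_
  rw [levyModulus, mul_pow, sq_sqrt (mul_nonneg hs0.le (log_nonneg (one_le_one_div hs0 hs1))),
    rpow_def_of_pos hs0, one_div, log_inv]
  congr 2
  field_simp

theorem IsStdBM.measureReal_not_coarseIncrementsLt_le (hB : IsStdBM P B) {c : ℝ} (hc : 0 ≤ c)
    {L n : ℕ} (hLn : L ≤ 2 ^ n) :
    P.real {ω | ¬CoarseIncrementsLt (fun t ↦ B t ω) c L n} ≤
      2 * L * L ^ (c ^ 2 / 2) * (2 / 2 ^ (c ^ 2 / 2)) ^ n := by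
  have := hB.isProb
  have h2n : (0 : ℝ) < 2 ^ n := by positivity
  have hterm : ∀ k : ℕ, ∀ l ∈ Finset.Icc 1 L, P.real {ω | c * levyModulus (l / 2 ^ n) ≤
      |B (k / 2 ^ n + l / 2 ^ n) ω - B (k / 2 ^ n) ω|} ≤
        2 * ((L : ℝ) / 2 ^ n) ^ (c ^ 2 / 2) := by
    intro k l hl
    obtain ⟨hl1, hlL⟩ := Finset.mem_Icc.1 hl
    have hlL' : (l : ℝ) ≤ L := by exact_mod_cast hlL
    refine (hB.measureReal_abs_sub_ge_levyModulus_le hc (by positivity) (by positivity)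
      ?_).trans ?_
    · rw [div_le_one h2n]; exact hlL'.trans (by exact_mod_cast hLn)
    · gcongr
  calc P.real {ω | ¬CoarseIncrementsLt (fun t ↦ B t ω) c L n}
      ≤ P.real (⋃ k ∈ Finset.range (2 ^ n), ⋃ l ∈ Finset.Icc 1 L,
          {ω | c * levyModulus (l / 2 ^ n) ≤ |B (k / 2 ^ n + l / 2 ^ n) ω - B (k / 2 ^ n) ω|}) :=
        measureReal_mono (fun ω hω ↦ by
          simp only [CoarseIncrementsLt, mem_ofPred_eq, not_forall, not_lt] at hω
          obtain ⟨k, hk, l, hl, hkl⟩ := hω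
          simp only [mem_iUnion, mem_ofPred_eq]
          exact ⟨k, Finset.mem_range.2 hk, l, hl, by rwa [← add_div]⟩) (measure_ne_top _ _)
    _ ≤ ∑ k ∈ Finset.range (2 ^ n), ∑ l ∈ Finset.Icc 1 L, 2 * ((L : ℝ) / 2 ^ n) ^ (c ^ 2 / 2) :=
        (measureReal_biUnion_finset_le _ _).trans <| Finset.sum_le_sum fun k _ ↦
          (measureReal_biUnion_finset_le _ _).trans <| Finset.sum_le_sum (hterm k)
    _ = 2 * L * L ^ (c ^ 2 / 2) * (2 / 2 ^ (c ^ 2 / 2)) ^ n := by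
        simp only [Finset.sum_const, Finset.card_range, Nat.card_Icc, nsmul_eq_mul]
        rw [div_rpow (by positivity) h2n.le, ← rpow_pow_comm zero_le_two, div_pow]
        push_cast
        field_simp

theorem IsStdBM.ae_eventually_dyadicStepsLt_and_coarseIncrementsLt (hB : IsStdBM P B) {c : ℝ}
    (hc : √2 < c) (L : ℕ) :
    ∀ᵐ ω ∂P, ∀ᶠ n in atTop,
      DyadicStepsLt (fun t ↦ B t ω) n ∧ CoarseIncrementsLt (fun t ↦ B t ω) c L n := by
  have := hB.isProb
  have hc0 : 0 ≤ c := (sqrt_nonneg 2).trans hc.le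
  have hγ : 1 < c ^ 2 / 2 := by nlinarith [sq_sqrt (zero_le_two : (0 : ℝ) ≤ 2), sqrt_nonneg 2]
  have hfine : Summable fun j : ℕ ↦ 2 * (2 * exp (-2)) ^ j := by
    refine (summable_geometric_of_lt_one (by positivity) ?_).mul_left 2
    rw [exp_neg, ← div_eq_mul_inv, div_lt_one (exp_pos _)]
    linarith [add_one_lt_exp (two_ne_zero : (2 : ℝ) ≠ 0)]
  have hcoarse : Summable fun n : ℕ ↦
      2 * (L : ℝ) * (L : ℝ) ^ (c ^ 2 / 2) * (2 / 2 ^ (c ^ 2 / 2)) ^ n := by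
    refine (summable_geometric_of_lt_one (by positivity) ?_).mul_left _
    rw [div_lt_one (by positivity)]
    simpa using rpow_lt_rpow_of_exponent_lt one_lt_two hγ
  filter_upwards [ae_eventually_notMem_of_measureReal_le hfine
      (.of_forall hB.measureReal_not_dyadicStepsLt_le),
    ae_eventually_notMem_of_measureReal_le hcoarse ((eventually_ge_atTop L).mono fun n hn ↦
      hB.measureReal_not_coarseIncrementsLt_le hc0 (hn.trans Nat.lt_two_pow_self.le))]
    with ω hfine hcoarse
  filter_upwards [hfine, hcoarse] with n hn1 hn2
  exact ⟨not_not.1 hn1, not_not.1 hn2⟩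

end BrownianMotion

/-- Upper modulus of continuity (Lévy): for every `c > √2`, almost surely there
is `h₀ > 0` such that for all `h ∈ (0, h₀)` and all `t ∈ [0, 1 − h]`,
`|B(t+h) − B(t)| < c·√(h·log(1/h))`. -/
theorem stmt_6 {Ω : Type} [MeasurableSpace Ω] (P : Measure Ω) (B : ℝ → Ω → ℝ)
    (hB : IsStdBM P B) (c : ℝ) (hc : Real.sqrt 2 < c) :
    ∀ᵐ ω ∂P, ∃ h₀ : ℝ, 0 < h₀ ∧ ∀ h : ℝ, 0 < h → h < h₀ →
      ∀ t : ℝ, 0 ≤ t → t ≤ 1 - h →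
        |B (t + h) ω - B t ω| < c * Real.sqrt (h * Real.log (1 / h)) := by
  obtain ⟨c₁, hc₁, hc₁c⟩ := exists_between hc
  set δ := c - c₁
  set K : ℝ := max 2 (288 / δ ^ 2)
  filter_upwards [hB.ae_eventually_dyadicStepsLt_and_coarseIncrementsLt hc₁ ⌈2 * K⌉₊, hB.cont]
    with ω hgood hcont
  obtain ⟨N, hN⟩ := (hgood.and ((eventually_dyadicScale_le_levyModulus (sub_pos.2 hc₁c)
    (le_max_right 2 _)).and (eventually_ge_atTop 8))).exists_forall_of_atTop
  refine ⟨K / 2 ^ N, by positivity, fun h hh hhN t ht0 ht1 ↦ ?_⟩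
  obtain ⟨n, hNn, hKh, hhK⟩ := exists_dyadic_level hh hhN
  obtain ⟨⟨-, hcoarse⟩, hscale, hn8⟩ := hN n hNn
  obtain ⟨hhe, hmod⟩ := hscale h hKh hhK
  calc |B (t + h) ω - B t ω| < c₁ * levyModulus h + 12 * dyadicScale n :=
        abs_sub_lt_of_dyadicStepsLt_of_coarseIncrementsLt hcont ((sqrt_nonneg 2).trans hc₁.le)
          hn8 (fun j hj ↦ (hN j (hNn.trans hj.le)).1.1) hcoarse ((le_max_left 2 _).trans hKh)
          (hhK.trans (Nat.le_ceil _)) hhe ht0 ht1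
    _ ≤ c₁ * levyModulus h + δ * levyModulus h := by linarith
    _ = c * levyModulus h := by ring
end

section
/- Let B be a standard one-dimensional Brownian motion started at 0. Almost surely, for all rationals 0 < a < b, if B has a zero in the interval [a,b], then there exist x, y ∈ [a,b] such that B(x) > 0 and B(y) < 0 (i.e., every zero in an interval bounded away from the origin is accompanied by a sign change on that interval). -/
open MeasureTheory ProbabilityTheory Set

/-!
If `B` vanishes somewhere on `[a, b]` but is nowhere positive there, its maximum over `[a, b]`
is `0`, so by continuity `B a = -⨆ q, (B q - B a)` with `q` ranging over the rationals in
`[a, b]`. The right-hand side is measurable with respect to the increments after `a`, which are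
independent of `B a - B 0 = B a`; since this increment is Gaussian with positive variance it has
no atoms, and the event has probability zero. Applying this to `-B` gives the negative value,
and there are only countably many rational pairs `(a, b)`.
-/

lemma Fin.monotone_cons {α : Type*} [Preorder α] {n : ℕ} {x : α} {f : Fin n → α}
    (hf : Monotone f) (hx : ∀ i, x ≤ f i) : Monotone (Fin.cons x f : Fin (n + 1) → α) :=
  monotone_iff_forall_lt.2 ((Fin.liftFun_cons _).2 ⟨hx, fun _ _ h => hf h.le⟩)

lemma IndepFun.measure_setOf_eq_eq_zero {Ω α : Type*} [MeasurableSpace Ω] [MeasurableSpace α]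
    [MeasurableEq α] {P : Measure Ω} [IsFiniteMeasure P] {X Z : Ω → α}
    (hXZ : IndepFun X Z P) (hX : Measurable X) (hZ : Measurable Z)
    [NullSingletonClass (P.map X)] : P {ω | X ω = Z ω} = 0 := by
  have hD : MeasurableSet (diagonal α) := measurableSet_diagonal
  have hslice (z : α) : (fun x => (x, z)) ⁻¹' diagonal α = {z} := by ext; simp
  calc P {ω | X ω = Z ω} = P.map (fun ω => (X ω, Z ω)) (diagonal α) := by
        rw [Measure.map_apply (hX.prodMk hZ) hD]; rfl
    _ = ∫⁻ z, P.map X ((fun x => (x, z)) ⁻¹' diagonal α) ∂P.map Z := by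
        rw [hXZ.map_prod_eq_prod_map_map hX.aemeasurable hZ.aemeasurable,
          Measure.prod_apply_symm hD]
    _ = 0 := by simp [hslice]

lemma ContinuousWithinAt.iSup_rat_eq_of_isMaxOn {f : ℝ → ℝ} {a b t : ℝ} (hab : a < b)
    (ht : t ∈ Icc a b) (hf : ContinuousWithinAt f (Icc a b) t) (hmax : IsMaxOn f (Icc a b) t) :
    ⨆ q : {q : ℚ // (q : ℝ) ∈ Icc a b}, f q = f t := by
  have hrat {δ : ℝ} (hδ : 0 < δ) : ∃ q : ℚ, (q : ℝ) ∈ Icc a b ∧ dist (q : ℝ) t < δ := by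
    obtain ⟨q, hq₁, hq₂⟩ := exists_rat_btwn
      (max_lt (lt_min hab (by linarith [ht.1])) (lt_min (by linarith [ht.2]) (by linarith)) :
        max a (t - δ) < min b (t + δ))
    refine ⟨q, ⟨(le_max_left _ _).trans hq₁.le, hq₂.le.trans (min_le_left _ _)⟩, ?_⟩
    rw [Real.dist_eq, abs_sub_lt_iff]
    constructor <;> linarith [le_max_right a (t - δ), min_le_right b (t + δ)]
  obtain ⟨q₀, hq₀, -⟩ := hrat one_pos
  have : Nonempty {q : ℚ // (q : ℝ) ∈ Icc a b} := ⟨⟨q₀, hq₀⟩⟩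
  refine ciSup_eq_of_forall_le_of_forall_lt_exists_gt (fun q => hmax q.2) fun w hw => ?_
  obtain ⟨δ, hδ, hnear⟩ := Metric.continuousWithinAt_iff.1 hf (f t - w) (sub_pos.2 hw)
  obtain ⟨q, hq, hqt⟩ := hrat hδ
  have := hnear hq hqt
  rw [Real.dist_eq, abs_sub_lt_iff] at this
  exact ⟨⟨q, hq⟩, by linarith⟩

abbrev incrementsAfter {Ω : Type*} (B : ℝ → Ω → ℝ) (a : ℝ) : MeasurableSpace Ω :=
  ⨆ s : Ici a, MeasurableSpace.comap (fun ω => B s ω - B a ω) inferInstance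

namespace IsStdBM

variable {Ω : Type} [MeasurableSpace Ω] {P : Measure Ω} {B : ℝ → Ω → ℝ}

lemma neg (hB : IsStdBM P B) : IsStdBM P (fun t ω => -B t ω) where
  isProb := hB.isProb
  meas t := (hB.meas t).neg
  start := by filter_upwards [hB.start] with ω h using by simp [h]
  indepIncr n t ht ht0 := by
    convert (hB.indepIncr n t ht ht0).comp (fun _ x => -x) (fun _ => measurable_neg) using 2
    ext ω
    simp only [Function.comp_apply]
    ring
  gaussIncr t h ht hh := by
    have hmeas : Measurable fun ω => B (t + h) ω - B t ω := (hB.meas _).sub (hB.meas _)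
    calc P.map (fun ω => -B (t + h) ω - -B t ω)
        = (P.map fun ω => B (t + h) ω - B t ω).map (fun x => -x) := by
          rw [Measure.map_map measurable_neg hmeas]
          congr 1; ext ω; simp only [Function.comp_apply]; ring
      _ = gaussianReal 0 h.toNNReal := by
          rw [hB.gaussIncr t h ht hh, gaussianReal_map_neg, neg_zero]
  cont := by filter_upwards [hB.cont] with ω h using h.neg

lemma nullSingletonClass_map_sub_zero (hB : IsStdBM P B) {a : ℝ} (ha : 0 < a) :
    NullSingletonClass (P.map fun ω => B a ω - B 0 ω) := by
  have h := hB.gaussIncr 0 a le_rfl ha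
  simp only [zero_add] at h
  rw [h]
  exact nullSingletonClass_gaussianReal (by simpa using ha)

lemma indep_increments_of_monotone (hB : IsStdBM P B) {n : ℕ} {s : Fin (n + 1) → ℝ}
    (hs : Monotone s) (hs0 : 0 ≤ s 0) :
    Indep (MeasurableSpace.comap (fun ω => B (s 0) ω - B 0 ω) inferInstance)
      (⨆ j, MeasurableSpace.comap (fun ω => B (s j) ω - B (s 0) ω) inferInstance) P := by
  let t : Fin (n + 2) → ℝ := Fin.cons 0 s
  have ht : Monotone t := Fin.monotone_cons hs fun i => hs0.trans (hs (Fin.zero_le i))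
  have ht0 (i : Fin (n + 2)) : 0 ≤ t i := ht (Fin.zero_le i)
  let D (i : Fin (n + 1)) (ω : Ω) : ℝ := B (t i.succ) ω - B (t i.castSucc) ω
  let m (i : Fin (n + 1)) : MeasurableSpace Ω := MeasurableSpace.comap (D i) inferInstance
  have hD : iIndep m P := (iIndepFun_iff_iIndep _ _ _).1 (hB.indepIncr (n + 1) t ht ht0)
  have hsplit := indep_iSup_of_disjoint (fun i => ((hB.meas _).sub (hB.meas _)).comap_le) hD
    (disjoint_compl_right (a := ({0} : Set (Fin (n + 1)))))
  simp only [mem_singleton_iff, iSup_iSup_eq_left] at hsplit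
  -- `B (s j) - B (s 0)` telescopes into the increments `D 1, …, D j`.
  refine indep_of_indep_of_le_right hsplit (iSup_le fun j => ?_)
  rw [← measurable_iff_comap_le]
  induction j using Fin.induction with
  | zero => simp only [sub_self]; exact measurable_const
  | succ j ih =>
    have hDj : Measurable[⨆ i ∈ ({0} : Set (Fin (n + 1)))ᶜ, m i] (D j.succ) :=
      measurable_iff_comap_le.2 (le_iSup₂ (f := fun i _ => m i) j.succ (Fin.succ_ne_zero j))
    convert ih.add hDj using 1
    ext ω
    simp [D, t]

lemma indep_incrementsAfter (hB : IsStdBM P B) {a : ℝ} (ha : 0 ≤ a) :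
    Indep (MeasurableSpace.comap (fun ω => B a ω - B 0 ω) inferInstance)
      (incrementsAfter B a) P := by
  have := hB.isProb
  have hle (s : ℝ) : MeasurableSpace.comap (fun ω => B s ω - B a ω) inferInstance ≤ ‹_› :=
    ((hB.meas s).sub (hB.meas a)).comap_le
  let m (F : Finset (Ici a)) : MeasurableSpace Ω :=
    ⨆ s ∈ F, MeasurableSpace.comap (fun ω => B s ω - B a ω) inferInstance
  have hm : Monotone m := fun _ _ hFG => biSup_mono fun _ hs => hFG hs
  rw [incrementsAfter, iSup_eq_iSup_finset]
  refine (indep_iSup_of_directed_le (m := m) (fun F => ?_) (fun F => iSup₂_le fun s _ => hle s)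
    ((hB.meas a).sub (hB.meas 0)).comap_le hm.directed_le).symm
  -- Sorted, a finite set of times after `a` is a monotone grid starting at `a`.
  let e := F.orderEmbOfFin rfl
  have hs : Monotone (Fin.cons a fun j => (e j : ℝ) : Fin (F.card + 1) → ℝ) :=
    Fin.monotone_cons (fun i j hij => e.monotone hij) fun j => (e j).2
  refine (indep_of_indep_of_le_right (hB.indep_increments_of_monotone hs ha) ?_).symm
  refine iSup₂_le fun s hsF => ?_
  obtain ⟨j, rfl⟩ : s ∈ range e := by rwa [Finset.range_orderEmbOfFin]
  exact le_iSup_of_le j.succ le_rfl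

lemma ae_exists_pos_of_exists_zero (hB : IsStdBM P B) {a b : ℝ} (ha : 0 < a) (hab : a < b) :
    ∀ᵐ ω ∂P, (∃ t ∈ Icc a b, B t ω = 0) → ∃ x ∈ Icc a b, 0 < B x ω := by
  have := hB.isProb
  have := hB.nullSingletonClass_map_sub_zero ha
  let Z (ω : Ω) : ℝ := ⨆ q : {q : ℚ // (q : ℝ) ∈ Icc a b}, (B q ω - B a ω)
  have hZ : Measurable[incrementsAfter B a] Z := Measurable.iSup fun q =>
    measurable_iff_comap_le.2 (le_iSup_of_le ⟨q, q.2.1⟩ le_rfl)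
  have hle : incrementsAfter B a ≤ ‹_› :=
    iSup_le fun s => ((hB.meas s).sub (hB.meas a)).comap_le
  have hnull : P {ω | B a ω - B 0 ω = -Z ω} = 0 :=
    IndepFun.measure_setOf_eq_eq_zero
      (indep_of_indep_of_le_right (hB.indep_incrementsAfter ha.le) hZ.neg.comap_le)
      ((hB.meas a).sub (hB.meas 0)) (hZ.neg.mono hle le_rfl)
  filter_upwards [hB.start, hB.cont, measure_eq_zero_iff_ae_notMem.1 hnull]
    with ω h0 hcont hne
  rintro ⟨t, ht, hBt⟩
  by_contra! hnonpos
  have hmax : IsMaxOn (fun x => B x ω - B a ω) (Icc a b) t := fun x hx => by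
    simpa [hBt] using hnonpos x hx
  have hcont_t : ContinuousWithinAt (fun x => B x ω - B a ω) (Icc a b) t :=
    ((hcont.mono fun x hx => ha.le.trans hx.1).continuousWithinAt ht).sub continuousWithinAt_const
  apply hne
  simp [Z, hcont_t.iSup_rat_eq_of_isMaxOn hab ht hmax, hBt, h0]

lemma ae_forall_rat_exists_pos_of_exists_zero (hB : IsStdBM P B) :
    ∀ᵐ ω ∂P, ∀ a b : ℚ, 0 < a → a < b →
      (∃ t ∈ Icc (a : ℝ) b, B t ω = 0) → ∃ x ∈ Icc (a : ℝ) b, 0 < B x ω := by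
  refine ae_all_iff.2 fun a => ae_all_iff.2 fun b => ?_
  simp only [Filter.eventually_imp_distrib_left]
  intro ha hab
  exact hB.ae_exists_pos_of_exists_zero (by exact_mod_cast ha) (by exact_mod_cast hab)

end IsStdBM

/-- Almost surely, for all rationals `0 < a < b`, if `B` has a zero in `[a,b]`
then `B` takes both a positive and a negative value on `[a,b]`. -/
theorem stmt_11 {Ω : Type} [MeasurableSpace Ω] (P : Measure Ω) (B : ℝ → Ω → ℝ)
    (hB : IsStdBM P B) :
    ∀ᵐ ω ∂P, ∀ a b : ℚ, 0 < a → a < b →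
      (∃ t ∈ Icc (a : ℝ) (b : ℝ), B t ω = 0) →
      (∃ x ∈ Icc (a : ℝ) (b : ℝ), 0 < B x ω) ∧
      (∃ y ∈ Icc (a : ℝ) (b : ℝ), B y ω < 0) := by
  filter_upwards [hB.ae_forall_rat_exists_pos_of_exists_zero,
    hB.neg.ae_forall_rat_exists_pos_of_exists_zero] with ω hpos hneg a b ha hab hzero
  obtain ⟨y, hy, hBy⟩ := hneg a b ha hab (by simpa using hzero)
  exact ⟨hpos a b ha hab hzero, y, hy, neg_pos.1 hBy⟩
end
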